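/- arXiv:2106.14001 — 7 statements merged into one kernel-verified Lean document; each statement's English description precedes it below -/
import Mathlib

section
/- Let α ∈ (0,1/2) be irrational and let N ≥ 3 be an integer. Then the number of integers q with 0 ≤ q ≤ N−1 such that {qα} ∈ [0,2α) equals ⌈⌊(N−1)/2⌋·2α⌉ + ⌈α + ⌊(N−2)/2⌋·2α⌉. -/
/-!
Since `0 ≤ 2α ≤ 1`, the indicator of `{qα} < 2α` is `⌊qα⌋ - ⌊(q - 2)α⌋`, so the count telescopes
to `⌊(N - 1)α⌋ + ⌊(N - 2)α⌋ - ⌊-α⌋ - ⌊-2α⌋ = ⌊(N - 1)α⌋ + ⌊(N - 2)α⌋ + 2`. As `α` is irrational,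
each of these floors is one less than the corresponding ceiling, and depending on the parity of `N`
the two ceilings in the formula are `⌈(N - 1)α⌉` and `⌈(N - 2)α⌉` in some order.
-/

open scoped Classical

open Finset

section FloorRing

variable {R : Type*} [CommRing R] [LinearOrder R] [IsStrictOrderedRing R] [FloorRing R]

theorem Int.ite_fract_lt_eq_floor_sub_floor {x b : R} (hb₀ : 0 ≤ b) (hb₁ : b ≤ 1) :
    (if Int.fract x < b then 1 else 0 : ℤ) = ⌊x⌋ - ⌊x - b⌋ := by
  have hle := Int.floor_le x
  have hlt := Int.lt_floor_add_one x
  split_ifs with h <;> rw [← Int.self_sub_floor] at h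
  · have : ⌊x - b⌋ = ⌊x⌋ - 1 := by
      rw [Int.floor_eq_iff]; push_cast; constructor <;> linarith
    omega
  · have : ⌊x - b⌋ = ⌊x⌋ := by
      rw [Int.floor_eq_iff]; constructor <;> linarith
    omega

theorem card_filter_fract_mul_lt (α b : R) (hb₀ : 0 ≤ b) (hb₁ : b ≤ 1) (N : ℕ) :
    (#((range N).filter fun q : ℕ => Int.fract (q * α) < b) : ℤ)
      = ∑ q ∈ range N, (⌊(q : R) * α⌋ - ⌊q * α - b⌋) := by
  rw [natCast_card_filter]
  exact sum_congr rfl fun q _ => Int.ite_fract_lt_eq_floor_sub_floor hb₀ hb₁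

theorem card_filter_fract_mul_lt_two_mul (α : R) (hα₀ : 0 ≤ α) (hα₁ : 2 * α ≤ 1) (N : ℕ) :
    (#((range N).filter fun q : ℕ => Int.fract (q * α) < 2 * α) : ℤ)
      = ⌊(N - 1) * α⌋ + ⌊(N - 2) * α⌋ - ⌊-α⌋ - ⌊-(2 * α)⌋ := by
  -- `⌊qα⌋ - ⌊(q - 2)α⌋` telescopes with step two, i.e. with step one for this `G`.
  set G : ℕ → ℤ := fun i => ⌊((i : R) - 1) * α⌋ + ⌊((i : R) - 2) * α⌋
  have hstep (q : ℕ) : ⌊(q : R) * α⌋ - ⌊q * α - 2 * α⌋ = G (q + 1) - G q := by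
    simp only [G]
    rw [Nat.cast_succ, add_sub_cancel_right, show (q : R) + 1 - 2 = q - 1 by ring,
      show (q : R) * α - 2 * α = (q - 2) * α by ring]
    ring
  rw [card_filter_fract_mul_lt α _ (by linarith) hα₁, sum_congr rfl fun q _ => hstep q,
    sum_range_sub G N]
  simp only [G, Nat.cast_zero, zero_sub, neg_mul, one_mul]
  ring

end FloorRing

theorem Irrational.ceil_eq_floor_add_one {x : ℝ} (hx : Irrational x) : ⌈x⌉ = ⌊x⌋ + 1 :=
  (Int.ceil_eq_floor_add_one_iff_notMem x).2 fun ⟨n, hn⟩ => hx.ne_int n hn.symm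

theorem ceil_div_two_mul_add_ceil_add_div_two_mul (α : ℝ) (N : ℕ) (hN : 2 ≤ N) :
    ⌈(((N - 1) / 2 : ℕ) : ℝ) * (2 * α)⌉ + ⌈α + (((N - 2) / 2 : ℕ) : ℝ) * (2 * α)⌉
      = ⌈(N - 1 : ℝ) * α⌉ + ⌈(N - 2 : ℝ) * α⌉ := by
  obtain ⟨m, rfl | rfl⟩ := Nat.even_or_odd' N
  · rw [show (2 * m - 1) / 2 = m - 1 by omega, show (2 * m - 2) / 2 = m - 1 by omega,
      Nat.cast_sub (by omega : 1 ≤ m), add_comm]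
    push_cast; ring_nf
  · rw [show (2 * m + 1 - 1) / 2 = m by omega, show (2 * m + 1 - 2) / 2 = m - 1 by omega,
      Nat.cast_sub (by omega : 1 ≤ m)]
    push_cast; ring_nf

/-- For irrational `α ∈ (0,1/2)` and `N ≥ 3`, the number of integers
`q` with `0 ≤ q ≤ N−1` such that `{qα} ∈ [0,2α)` equals
`⌈⌊(N−1)/2⌋·2α⌉ + ⌈α + ⌊(N−2)/2⌋·2α⌉`. -/
theorem veech_count_case_m_eq_two_small (α : ℝ) (hirr : Irrational α)
    (h0 : 0 < α) (h1 : α < 1 / 2) (N : ℕ) (hN : 3 ≤ N) :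
    (((Finset.range N).filter (fun q => Int.fract ((q : ℝ) * α) < 2 * α)).card : ℤ)
      = ⌈(((N - 1) / 2 : ℕ) : ℝ) * (2 * α)⌉ + ⌈α + (((N - 2) / 2 : ℕ) : ℝ) * (2 * α)⌉ := by
  have hfloor_neg : ⌊-α⌋ = -1 ∧ ⌊-(2 * α)⌋ = -1 := by
    simp only [Int.floor_eq_iff]; push_cast; constructor <;> constructor <;> linarith
  have hirr₁ : Irrational ((N - 1 : ℝ) * α) := by
    exact_mod_cast hirr.intCast_mul (by omega : (N : ℤ) - 1 ≠ 0)
  have hirr₂ : Irrational ((N - 2 : ℝ) * α) := by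
    exact_mod_cast hirr.intCast_mul (by omega : (N : ℤ) - 2 ≠ 0)
  -- The ascription `q : ℝ` makes the filter run over the image of `range N` in `ℝ`.
  simp only [Finset.pure_def, Finset.bind_def, Finset.sup_singleton_apply]
  rw [filter_image, card_image_of_injective _ Nat.cast_injective,
    card_filter_fract_mul_lt_two_mul α h0.le (by linarith) N, hfloor_neg.1, hfloor_neg.2,
    ceil_div_two_mul_add_ceil_add_div_two_mul α N (by omega),
    hirr₁.ceil_eq_floor_add_one, hirr₂.ceil_eq_floor_add_one]
  ring
end

section
/- Let α ∈ (1/2,1) be irrational and let N ≥ 3 be an integer. Then the number of integers q with 0 ≤ q ≤ N−1 such that {qα} ∈ [0,2α−1) equals ⌈⌊(N−1)/2⌋·(2α−1)⌉ + ⌊α + ⌊(N−2)/2⌋·(2α−1)⌋. -/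
/-!
Writing `𝟙[{x} < {y}] = ⌊x⌋ - ⌊y⌋ - ⌊x - y⌋` with `x = qα`, `y = mα` turns the count of
`q < N` with `{qα} < {mα}` into a sum that telescopes with step `m`. For `m = 2` and
`1/2 < α < 1`, where `{2α} = 2α - 1`, the count is `⌊(N-1)α⌋ + ⌊(N-2)α⌋ + 3 - N`.
The right-hand side reduces to the same floors: `⌊(N-1)/2⌋(2α-1)` and `α + ⌊(N-2)/2⌋(2α-1)`
are `(N-1)α` and `(N-2)α`, in some order, minus an integer, and irrationality turns the
ceiling into a floor plus one.
-/

open scoped Classical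

open Finset

theorem Finset.sum_range_shift_sub {G : Type*} [AddCommGroup G] (g : ℕ → G) (m N : ℕ) :
    ∑ q ∈ range N, (g (q + m) - g q) = ∑ i ∈ range m, (g (N + i) - g i) := by
  have h := (sum_range_add g m N).symm.trans (add_comm m N ▸ sum_range_add g N m)
  simp only [sum_sub_distrib, sub_eq_sub_iff_add_eq_add, add_comm _ m]
  rw [add_comm, h, add_comm]

section FloorRing

variable {R : Type*} [CommRing R] [LinearOrder R] [IsStrictOrderedRing R] [FloorRing R]

theorem Int.floor_sub_eq_floor_sub_floor_sub_ite (x y : R) :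
    ⌊x - y⌋ = ⌊x⌋ - ⌊y⌋ - if Int.fract x < Int.fract y then 1 else 0 := by
  have hx : x - y = (Int.fract x - Int.fract y) + ((⌊x⌋ - ⌊y⌋ : ℤ) : R) := by
    push_cast; rw [Int.fract, Int.fract]; abel
  rw [hx, Int.floor_add_intCast]
  have := Int.fract_nonneg x; have := Int.fract_lt_one x
  have := Int.fract_nonneg y; have := Int.fract_lt_one y
  split_ifs with h
  · rw [(Int.floor_eq_iff (z := -1)).2 ⟨by push_cast; linarith, by push_cast; linarith⟩]; ring
  · rw [(Int.floor_eq_iff (z := 0)).2 ⟨by push_cast; linarith, by push_cast; linarith⟩]; ring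

theorem card_fract_mul_lt_fract_mul (α : R) (m N : ℕ) :
    (#((range N).filter fun q : ℕ => Int.fract (q * α) < Int.fract (m * α)) : ℤ) =
      ∑ i ∈ range m, (⌊((N : R) + i - m) * α⌋ - ⌊((i : R) - m) * α⌋) - N * ⌊m * α⌋ := by
  have indicator (q : ℕ) :
      ((if Int.fract ((q : R) * α) < Int.fract (m * α) then 1 else 0 : ℕ) : ℤ) =
        (⌊((q : R) * α)⌋ - ⌊((q : R) - m) * α⌋) - ⌊m * α⌋ := by
    rw [sub_mul, Int.floor_sub_eq_floor_sub_floor_sub_ite]; push_cast; ring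
  have telescope := sum_range_shift_sub (fun k : ℕ => ⌊((k : R) - m) * α⌋) m N
  simp only [Nat.cast_add, add_sub_cancel_right] at telescope
  rw [card_filter, Nat.cast_sum, sum_congr rfl fun q _ => indicator q, sum_sub_distrib, telescope]
  simp

theorem card_fract_mul_lt_two_mul_sub_one {α : R} (h0 : 1 < 2 * α) (h1 : α < 1) (N : ℕ) :
    (#((range N).filter fun q : ℕ => Int.fract (q * α) < 2 * α - 1) : ℤ) =
      ⌊((N : R) - 1) * α⌋ + ⌊((N : R) - 2) * α⌋ + 3 - N := by
  have hfract : Int.fract (2 * α) = 2 * α - 1 := by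
    rw [Int.fract_eq_iff]; exact ⟨by linarith, by linarith, 1, by push_cast; ring⟩
  have hfloor_two : ⌊2 * α⌋ = 1 :=
    Int.floor_eq_iff.2 ⟨by push_cast; linarith, by push_cast; linarith⟩
  have hfloor_neg_one : ⌊((1 : R) - 2) * α⌋ = -1 :=
    Int.floor_eq_iff.2 ⟨by push_cast; linarith, by push_cast; linarith⟩
  have hfloor_neg_two : ⌊((0 : R) - 2) * α⌋ = -2 :=
    Int.floor_eq_iff.2 ⟨by push_cast; linarith, by push_cast; linarith⟩
  have hcount := card_fract_mul_lt_fract_mul α 2 N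
  simp only [sum_range_succ, sum_range_zero, Nat.cast_zero, Nat.cast_one, Nat.cast_ofNat,
    hfloor_neg_two, hfloor_neg_one, hfloor_two, add_zero, zero_add] at hcount
  rw [← hfract, hcount, show (N : R) + 1 - 2 = N - 1 by ring]
  ring

end FloorRing

theorem ceil_add_floor_eq_floor_add_floor {α : ℝ} (hα : Irrational α) {N : ℕ} (hN : 3 ≤ N) :
    ⌈(((N - 1) / 2 : ℕ) : ℝ) * (2 * α - 1)⌉ + ⌊α + (((N - 2) / 2 : ℕ) : ℝ) * (2 * α - 1)⌋ =
      ⌊((N : ℝ) - 1) * α⌋ + ⌊((N : ℝ) - 2) * α⌋ + 3 - N := by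
  set a := (N - 1) / 2
  set b := (N - 2) / 2
  have hceil : ⌈(a : ℝ) * (2 * α - 1)⌉ = ⌊((2 * a : ℕ) : ℝ) * α⌋ + 1 - a := by
    rw [show (a : ℝ) * (2 * α - 1) = ((2 * a : ℕ) : ℝ) * α - a by push_cast; ring,
      Int.ceil_sub_natCast, (hα.natCast_mul (by omega)).ceil_eq_floor_add_one]
  have hfloor : ⌊α + (b : ℝ) * (2 * α - 1)⌋ = ⌊((2 * b + 1 : ℕ) : ℝ) * α⌋ - b := by
    rw [show α + (b : ℝ) * (2 * α - 1) = ((2 * b + 1 : ℕ) : ℝ) * α - b by push_cast; ring,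
      Int.floor_sub_natCast]
  have hsum : (a : ℤ) + b + 2 = N := by omega
  rw [hceil, hfloor]
  rcases (by omega : 2 * a = N - 2 ∧ 2 * b + 1 = N - 1 ∨ 2 * a = N - 1 ∧ 2 * b + 1 = N - 2)
    with ⟨ha, hb⟩ | ⟨ha, hb⟩ <;>
  · rw [ha, hb, Nat.cast_sub (by omega), Nat.cast_sub (by omega)]
    push_cast
    linarith

/-- For irrational `α ∈ (1/2,1)` and `N ≥ 3`, the number of integers
`q` with `0 ≤ q ≤ N−1` such that `{qα} ∈ [0,2α−1)` equals
`⌈⌊(N−1)/2⌋·(2α−1)⌉ + ⌊α + ⌊(N−2)/2⌋·(2α−1)⌋`. -/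
theorem veech_count_case_m_eq_two_large (α : ℝ) (hirr : Irrational α)
    (h0 : 1 / 2 < α) (h1 : α < 1) (N : ℕ) (hN : 3 ≤ N) :
    (((Finset.range N).filter (fun q => Int.fract ((q : ℝ) * α) < 2 * α - 1)).card : ℤ)
      = ⌈(((N - 1) / 2 : ℕ) : ℝ) * (2 * α - 1)⌉
        + ⌊α + (((N - 2) / 2 : ℕ) : ℝ) * (2 * α - 1)⌋ := by
  -- the statement's `Finset.range N : Finset ℝ` is the image of `range N` under the Finset monad
  have hrange : (do let a ← range N; pure (a : ℝ) : Finset ℝ) = (range N).image Nat.cast := by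
    simp
  rw [ceil_add_floor_eq_floor_add_floor hirr hN,
    ← card_fract_mul_lt_two_mul_sub_one (by linarith) h1, hrange, filter_image,
    card_image_of_injective _ Nat.cast_injective]
end

section
/- Let n ≥ 2 and m ≥ 2 be integers, let α ∈ (0,1) be irrational, set b = {mα}, and suppose d = gcd(n, m, Υ(m;α)) > 1. Then X = (ℤ/nℤ) × [0,1) can be partitioned into d pairwise disjoint Borel sets S_1, …, S_d, each invariant under the Veech skew product T_{n,α,b} and each of μ-measure n/d, where μ is the product of counting measure on ℤ/nℤ and Lebesgue measure on [0,1). In particular T_{n,α,b} is not ergodic with respect to μ, and no orbit of T_{n,α,b} is equidistributed. -/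
open scoped Classical
open MeasureTheory

instance (n : ℕ) : MeasurableSpace (ZMod n) := ⊤

instance (n : ℕ) : MeasurableSingletonClass (ZMod n) :=
  ⟨fun _ => MeasurableSpace.measurableSet_top⟩

/-- The Veech skew product `T_{n,α,b}` on `(ℤ/nℤ) × [0,1)`. -/
noncomputable def veechT (n : ℕ) (α b : ℝ) (p : ZMod n × ℝ) : ZMod n × ℝ :=
  if Int.fract (p.2 + α) < b then (p.1 + 1, Int.fract (p.2 + α))
  else (p.1, Int.fract (p.2 + α))

/-- The invariant measure of the Veech skew product: the product of counting measure
on `ℤ/nℤ` and Lebesgue measure on `[0,1)`; it has total mass `n`. -/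
noncomputable def veechMeasure (n : ℕ) : Measure (ZMod n × ℝ) :=
  (Measure.count : Measure (ZMod n)).prod (volume.restrict (Set.Ico (0 : ℝ) 1))

/-- Equidistribution of the orbit of `x` under `T_{n,α,b}`. -/
def veechEquidistributed (n : ℕ) (α b : ℝ) (x : ZMod n × ℝ) : Prop :=
  ∀ ℓ : ZMod n, ∀ c d : ℝ, 0 ≤ c → c ≤ d → d ≤ 1 →
    Filter.Tendsto
      (fun N : ℕ =>
        (((Finset.range N).filter (fun j =>
            ((veechT n α b)^[j] x).1 = ℓ ∧ ((veechT n α b)^[j] x).2 ∈ Set.Ico c d)).card : ℝ)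
          / (N : ℝ))
      Filter.atTop (nhds ((d - c) / (n : ℝ)))

/-- The number `Υ(m;α)` of integers `1 ≤ q ≤ m` with `{qα} < α`. -/
noncomputable def UpsilonCount (m : ℕ) (α : ℝ) : ℕ :=
  ((Finset.Icc 1 m).filter (fun q => Int.fract ((q : ℝ) * α) < α)).card


open scoped ENNReal

namespace VeechAux

open Finset

/-- The transfer function `Φ(y) = ∑_{q<m} ⌊y - qα⌋`. -/
noncomputable def Phi (m : ℕ) (α : ℝ) (y : ℝ) : ℤ :=
  ∑ q ∈ Finset.range m, ⌊y - (q : ℝ) * α⌋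

lemma indicator_eq_floor_sub (t b : ℝ) (hb0 : 0 ≤ b) (hb1 : b < 1) :
    (if Int.fract t < b then (1 : ℤ) else 0) = ⌊t⌋ - ⌊t - b⌋ := by
  have hfr : (⌊t⌋ : ℝ) + Int.fract t = t := Int.floor_add_fract t
  rcases lt_or_ge (Int.fract t) b with h | h
  · rw [if_pos h]
    have h1 : ⌊t - b⌋ < ⌊t⌋ := Int.floor_lt.2 (by linarith)
    have h2 : (⌊t⌋ : ℤ) - 1 ≤ ⌊t - b⌋ := by
      apply Int.le_floor.2
      push_cast
      have := Int.floor_le t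
      linarith
    omega
  · rw [if_neg (not_lt.mpr h)]
    have h1 : (⌊t⌋ : ℤ) ≤ ⌊t - b⌋ := Int.le_floor.2 (by linarith)
    have h2 : ⌊t - b⌋ ≤ ⌊t⌋ := Int.floor_le_floor (by linarith)
    omega

lemma measurable_phi (m : ℕ) (α : ℝ) : Measurable (Phi m α) := by
  apply Finset.measurable_sum
  intro q _
  exact Int.measurable_floor.comp (measurable_id.sub measurable_const)

/-- The basic cocycle identity. -/
lemma cocycle (m : ℕ) (α y : ℝ) :
    (if Int.fract (y + α) < Int.fract ((m : ℝ) * α) then (1 : ℤ) else 0)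
      = Phi m α (Int.fract (y + α)) - Phi m α y + (m : ℤ) * ⌊y + α⌋ - ⌊(m : ℝ) * α⌋ := by
  have hA := indicator_eq_floor_sub (y + α) (Int.fract ((m : ℝ) * α))
    (Int.fract_nonneg _) (Int.fract_lt_one _)
  have hB : ⌊y + α - Int.fract ((m : ℝ) * α)⌋ = ⌊y + α - (m : ℝ) * α⌋ + ⌊(m : ℝ) * α⌋ := by
    have hfr : (⌊(m : ℝ) * α⌋ : ℝ) + Int.fract ((m : ℝ) * α) = (m : ℝ) * α :=
      Int.floor_add_fract _
    have h2 : y + α - Int.fract ((m : ℝ) * α)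
        = (y + α - (m : ℝ) * α) + (⌊(m : ℝ) * α⌋ : ℤ) := by push_cast; linarith
    rw [h2, Int.floor_add_intCast]
  have hC : Phi m α (Int.fract (y + α))
      = (∑ q ∈ Finset.range m, ⌊y + α - (q : ℝ) * α⌋) - (m : ℤ) * ⌊y + α⌋ := by
    unfold Phi
    have hterm : ∀ q ∈ Finset.range m,
        ⌊Int.fract (y + α) - (q : ℝ) * α⌋ = ⌊y + α - (q : ℝ) * α⌋ - ⌊y + α⌋ := by
      intro q _
      have hfr : (⌊y + α⌋ : ℝ) + Int.fract (y + α) = y + α := Int.floor_add_fract _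
      have h2 : Int.fract (y + α) - (q : ℝ) * α
          = (y + α - (q : ℝ) * α) + (-⌊y + α⌋ : ℤ) := by push_cast; linarith
      rw [h2, Int.floor_add_intCast]; ring
    rw [Finset.sum_congr rfl hterm, Finset.sum_sub_distrib, Finset.sum_const,
      Finset.card_range, nsmul_eq_mul]
  have hD : (∑ q ∈ Finset.range m, ⌊y + α - (q : ℝ) * α⌋) - Phi m α y
      = ⌊y + α⌋ - ⌊y + α - (m : ℝ) * α⌋ := by
    unfold Phi
    rw [← Finset.sum_sub_distrib]
    have hterm : ∀ q ∈ Finset.range m,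
        ⌊y + α - (q : ℝ) * α⌋ - ⌊y - (q : ℝ) * α⌋
          = (fun k : ℕ => ⌊y + α - (k : ℝ) * α⌋) q
            - (fun k : ℕ => ⌊y + α - (k : ℝ) * α⌋) (q + 1) := by
      intro q _
      simp only
      congr 2
      push_cast; ring
    rw [Finset.sum_congr rfl hterm, Finset.sum_range_sub']
    simp
  rw [hA, hB, hC]
  linarith [hD]

lemma upsilon_eq (m : ℕ) (α : ℝ) (h0 : 0 ≤ α) (h1 : α < 1) :
    (UpsilonCount m α : ℤ) = ⌊(m : ℝ) * α⌋ := by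
  unfold UpsilonCount
  rw [bind_pure_comp, Finset.fmap_def, Finset.filter_image,
    Finset.card_image_of_injective _ Nat.cast_injective,
    Finset.card_filter, Nat.cast_sum]
  simp only [apply_ite (fun k : ℕ => (k : ℤ)), Nat.cast_one, Nat.cast_zero]
  have key : ∀ q ∈ Finset.Icc 1 m, (if Int.fract ((q : ℝ) * α) < α then (1 : ℤ) else 0)
      = ⌊(q : ℝ) * α⌋ - ⌊((q - 1 : ℕ) : ℝ) * α⌋ := by
    intro q hq
    have hq1 : 1 ≤ q := (Finset.mem_Icc.mp hq).1
    rw [indicator_eq_floor_sub _ α h0 h1]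
    congr 2
    have : ((q - 1 : ℕ) : ℝ) = (q : ℝ) - 1 := by
      push_cast [hq1]; ring
    rw [this]; ring
  rw [Finset.sum_congr rfl key]
  rw [show Finset.Icc 1 m = Finset.Ico 1 (m + 1) from (Finset.Ico_add_one_right_eq_Icc 1 m).symm,
    Finset.sum_Ico_eq_sum_range]
  have hterm : ∀ i ∈ Finset.range (m + 1 - 1),
      (⌊((1 + i : ℕ) : ℝ) * α⌋ - ⌊((1 + i - 1 : ℕ) : ℝ) * α⌋)
        = (fun k : ℕ => ⌊(k : ℝ) * α⌋) (i + 1) - (fun k : ℕ => ⌊(k : ℝ) * α⌋) i := by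
    intro i _
    have h1 : (1 + i : ℕ) = i + 1 := by omega
    have h2 : (1 + i - 1 : ℕ) = i := by omega
    rw [h2, h1]
  rw [Finset.sum_congr rfl hterm]
  have hs := Finset.sum_range_sub (fun k : ℕ => ⌊(k : ℝ) * α⌋) (m + 1 - 1)
  rw [hs]
  norm_num

lemma fract_ne_zero (m : ℕ) (α : ℝ) (hirr : Irrational α) (q : ℕ) (hq : 1 ≤ q) :
    Int.fract ((q : ℝ) * α) ≠ 0 := by
  intro h
  have hfr : (⌊(q : ℝ) * α⌋ : ℝ) + Int.fract ((q : ℝ) * α) = (q : ℝ) * α :=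
    Int.floor_add_fract _
  rw [h, add_zero] at hfr
  exact (hirr.natCast_mul (by omega : q ≠ 0)).ne_int ⌊(q : ℝ) * α⌋ hfr.symm

lemma phi_eq_of_small (m : ℕ) (α : ℝ) (hirr : Irrational α) {y : ℝ}
    (hy0 : 0 ≤ y) (hy1 : y < 1)
    (hsmall : ∀ q : ℕ, 1 ≤ q → q < m → y < Int.fract ((q : ℝ) * α)) :
    Phi m α y = Phi m α 0 := by
  unfold Phi
  refine Finset.sum_congr rfl fun q hq => ?_
  rcases Nat.eq_zero_or_pos q with h | h
  · subst h
    simp only [Nat.cast_zero, zero_mul, sub_zero]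
    rw [Int.floor_eq_zero_iff.mpr (Set.mem_Ico.mpr ⟨hy0, hy1⟩)]
    simp
  · have hql : q < m := Finset.mem_range.mp hq
    have hfz := fract_ne_zero m α hirr q h
    have hfr : (⌊-((q : ℝ) * α)⌋ : ℝ) + Int.fract (-((q : ℝ) * α)) = -((q : ℝ) * α) :=
      Int.floor_add_fract _
    have hneg : Int.fract (-((q : ℝ) * α)) = 1 - Int.fract ((q : ℝ) * α) :=
      Int.fract_neg hfz
    have h3 := hsmall q h hql
    have hval : ⌊y - (q : ℝ) * α⌋ = ⌊-((q : ℝ) * α)⌋ := by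
      rw [Int.floor_eq_iff]
      constructor
      · have := Int.floor_le (-((q : ℝ) * α)); linarith
      · rw [hneg] at hfr; push_cast; linarith
    rw [hval]
    congr 1
    ring

end VeechAux

namespace VeechAux

/-- The candidate invariant set with residue `r`. -/
noncomputable def Sres (n m d : ℕ) (hdn : d ∣ n) (α : ℝ) (r : ZMod d) :
    Set (ZMod n × ℝ) :=
  {p | p.2 ∈ Set.Ico (0 : ℝ) 1 ∧
    ((Phi m α p.2 : ℤ) : ZMod d) = ZMod.castHom hdn (ZMod d) p.1 - r}

lemma mem_Sres {n m d : ℕ} {hdn : d ∣ n} {α : ℝ} {r : ZMod d} {p : ZMod n × ℝ} :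
    p ∈ Sres n m d hdn α r ↔ p.2 ∈ Set.Ico (0 : ℝ) 1 ∧
      ((Phi m α p.2 : ℤ) : ZMod d) = ZMod.castHom hdn (ZMod d) p.1 - r := Iff.rfl

lemma measurableSet_B (m d : ℕ) (α : ℝ) (c : ZMod d) :
    MeasurableSet {y : ℝ | y ∈ Set.Ico (0 : ℝ) 1 ∧ ((Phi m α y : ℤ) : ZMod d) = c} := by
  have h : {y : ℝ | y ∈ Set.Ico (0 : ℝ) 1 ∧ ((Phi m α y : ℤ) : ZMod d) = c}
      = Set.Ico (0 : ℝ) 1 ∩ (fun y : ℝ => ((Phi m α y : ℤ) : ZMod d)) ⁻¹' {c} := by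
    ext y; simp [Set.mem_setOf_eq]
  rw [h]
  exact measurableSet_Ico.inter
    ((measurable_from_top.comp (measurable_phi m α)) (measurableSet_singleton c))

lemma Sres_eq_iUnion (n m d : ℕ) (hdn : d ∣ n) (α : ℝ) (r : ZMod d) :
    Sres n m d hdn α r = ⋃ ℓ : ZMod n, ({ℓ} : Set (ZMod n)) ×ˢ
      {y : ℝ | y ∈ Set.Ico (0 : ℝ) 1 ∧
        ((Phi m α y : ℤ) : ZMod d) = ZMod.castHom hdn (ZMod d) ℓ - r} := by
  ext p
  simp only [Sres, Set.mem_setOf_eq, Set.mem_iUnion, Set.mem_prod, Set.mem_singleton_iff]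
  constructor
  · rintro ⟨h1, h2⟩; exact ⟨p.1, rfl, h1, h2⟩
  · rintro ⟨ℓ, rfl, h1, h2⟩; exact ⟨h1, h2⟩

lemma measurableSet_Sres (n m d : ℕ) [NeZero n] (hdn : d ∣ n) (α : ℝ) (r : ZMod d) :
    MeasurableSet (Sres n m d hdn α r) := by
  rw [Sres_eq_iUnion]
  exact MeasurableSet.iUnion fun ℓ =>
    (measurableSet_singleton ℓ).prod (measurableSet_B m d α _)

lemma Sres_invariant (n m d : ℕ) (hdn : d ∣ n) (hdm : d ∣ m) (α : ℝ)
    (hflo : (d : ℤ) ∣ ⌊(m : ℝ) * α⌋) (r : ZMod d) :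
    ∀ p ∈ Sres n m d hdn α r,
      veechT n α (Int.fract ((m : ℝ) * α)) p ∈ Sres n m d hdn α r := by
  rintro ⟨ℓ, y⟩ ⟨hy, hres⟩
  dsimp only at hy hres
  have hkey := cocycle m α y
  have hm0 : ((m : ℕ) : ZMod d) = 0 := (ZMod.natCast_eq_zero_iff m d).mpr hdm
  have hf0 : ((⌊(m : ℝ) * α⌋ : ℤ) : ZMod d) = 0 :=
    (ZMod.intCast_zmod_eq_zero_iff_dvd _ _).mpr hflo
  by_cases h : Int.fract (y + α) < Int.fract ((m : ℝ) * α)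
  · rw [if_pos h] at hkey
    have hc : ((Phi m α (Int.fract (y + α)) : ℤ) : ZMod d)
        = ((Phi m α y : ℤ) : ZMod d) + 1 := by
      have h2 := congrArg (fun z : ℤ => ((z : ℤ) : ZMod d)) hkey
      push_cast at h2
      rw [hm0, hf0] at h2
      ring_nf at h2 ⊢
      linear_combination -h2
    show veechT n α (Int.fract ((m : ℝ) * α)) (ℓ, y) ∈ _
    unfold veechT
    rw [if_pos h]
    refine ⟨⟨Int.fract_nonneg _, Int.fract_lt_one _⟩, ?_⟩
    show ((Phi m α (Int.fract (y + α)) : ℤ) : ZMod d)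
      = ZMod.castHom hdn (ZMod d) (ℓ + 1) - r
    rw [map_add, map_one, hc, hres]
    ring
  · rw [if_neg h] at hkey
    have hc : ((Phi m α (Int.fract (y + α)) : ℤ) : ZMod d)
        = ((Phi m α y : ℤ) : ZMod d) := by
      have h2 := congrArg (fun z : ℤ => ((z : ℤ) : ZMod d)) hkey
      push_cast at h2
      rw [hm0, hf0] at h2
      ring_nf at h2 ⊢
      linear_combination -h2
    show veechT n α (Int.fract ((m : ℝ) * α)) (ℓ, y) ∈ _
    unfold veechT
    rw [if_neg h]
    exact ⟨⟨Int.fract_nonneg _, Int.fract_lt_one _⟩, by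
      show ((Phi m α (Int.fract (y + α)) : ℤ) : ZMod d)
        = ZMod.castHom hdn (ZMod d) ℓ - r
      rw [hc, hres]⟩

lemma measure_Sres_eq_sum (n m d : ℕ) [NeZero n] (hdn : d ∣ n) (α : ℝ) (r : ZMod d) :
    veechMeasure n (Sres n m d hdn α r)
      = ∑ ℓ : ZMod n, (volume.restrict (Set.Ico (0 : ℝ) 1))
          {y : ℝ | y ∈ Set.Ico (0 : ℝ) 1 ∧
            ((Phi m α y : ℤ) : ZMod d) = ZMod.castHom hdn (ZMod d) ℓ - r} := by
  unfold veechMeasure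
  rw [Measure.prod_apply (measurableSet_Sres n m d hdn α r), lintegral_count, tsum_fintype]
  refine Finset.sum_congr rfl fun ℓ _ => ?_
  congr 1

lemma measure_Sres_shift (n m d : ℕ) [NeZero n] (hdn : d ∣ n) (α : ℝ) (r : ZMod d) :
    veechMeasure n (Sres n m d hdn α r) = veechMeasure n (Sres n m d hdn α (r + 1)) := by
  rw [measure_Sres_eq_sum, measure_Sres_eq_sum]
  refine Fintype.sum_equiv (Equiv.addRight (1 : ZMod n)) _ _ fun ℓ => ?_
  congr 2
  rw [Equiv.coe_addRight, map_add, map_one]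
  ring

lemma measure_Sres_const (n m d : ℕ) [NeZero n] [NeZero d] (hdn : d ∣ n) (α : ℝ)
    (r : ZMod d) :
    veechMeasure n (Sres n m d hdn α r) = veechMeasure n (Sres n m d hdn α 0) := by
  have key : ∀ k : ℕ, veechMeasure n (Sres n m d hdn α ((k : ℕ) : ZMod d))
      = veechMeasure n (Sres n m d hdn α 0) := by
    intro k
    induction k with
    | zero => simp
    | succ k ih =>
      rw [show (((k + 1 : ℕ)) : ZMod d) = ((k : ℕ) : ZMod d) + 1 by push_cast; ring,
        ← measure_Sres_shift n m d hdn α ((k : ℕ) : ZMod d), ih]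
  have hr : (((r.val : ℕ)) : ZMod d) = r := ZMod.natCast_rightInverse r
  rw [← hr]
  exact key r.val

end VeechAux

/-- Lemma 2.1 and its consequences. For `n ≥ 2`, `m ≥ 2`,
irrational `α ∈ (0,1)` and `b = {mα}`, if `d = gcd(n, m, Υ(m;α)) > 1` then the
space `(ℤ/nℤ) × [0,1)` splits into `d` pairwise disjoint invariant Borel sets of
measure `n/d` each; in particular the Veech skew product is not ergodic and no
orbit is equidistributed. -/
theorem veech_invariant_partition_of_gcd_gt_one (n m d : ℕ) (hn : 2 ≤ n) (hm : 2 ≤ m)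
    (α : ℝ) (hirr : Irrational α) (h0 : 0 < α) (h1 : α < 1)
    (b : ℝ) (hb : b = Int.fract ((m : ℝ) * α))
    (hd : d = Nat.gcd n (Nat.gcd m (UpsilonCount m α))) (hd1 : 1 < d) :
    (∃ S : Fin d → Set (ZMod n × ℝ),
        (∀ i, MeasurableSet (S i)) ∧
        (∀ i j, i ≠ j → Disjoint (S i) (S j)) ∧
        (⋃ i, S i) = (Set.univ : Set (ZMod n)) ×ˢ Set.Ico (0 : ℝ) 1 ∧
        (∀ i, ∀ x ∈ S i, veechT n α b x ∈ S i) ∧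
        (∀ i, veechMeasure n (S i) = (n : ENNReal) / (d : ENNReal))) ∧
      ¬ (∀ S : Set (ZMod n × ℝ), MeasurableSet S → (∀ x ∈ S, veechT n α b x ∈ S) →
          veechMeasure n S = 0 ∨ veechMeasure n S = (n : ENNReal)) ∧
      ∀ x : ZMod n × ℝ, x.2 ∈ Set.Ico (0 : ℝ) 1 → ¬ veechEquidistributed n α b x := by
  have hd0 : 0 < d := by omega
  haveI : NeZero n := ⟨by omega⟩
  haveI : NeZero d := ⟨by omega⟩
  haveI : Fact (1 < d) := ⟨hd1⟩
  subst hb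
  have hdn : d ∣ n := by rw [hd]; exact Nat.gcd_dvd_left _ _
  have hdm : d ∣ m := by
    rw [hd]; exact (Nat.gcd_dvd_right _ _).trans (Nat.gcd_dvd_left _ _)
  have hdU : d ∣ UpsilonCount m α := by
    rw [hd]; exact (Nat.gcd_dvd_right _ _).trans (Nat.gcd_dvd_right _ _)
  have hflo : (d : ℤ) ∣ ⌊(m : ℝ) * α⌋ := by
    rw [← VeechAux.upsilon_eq m α h0.le h1]
    exact Int.natCast_dvd_natCast.mpr hdU
  set S : Fin d → Set (ZMod n × ℝ) :=
    fun i => VeechAux.Sres n m d hdn α ((i.val : ℕ) : ZMod d) with hS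
  have hmeas : ∀ i, MeasurableSet (S i) :=
    fun i => VeechAux.measurableSet_Sres n m d hdn α _
  have hinv : ∀ i, ∀ x ∈ S i, veechT n α (Int.fract ((m : ℝ) * α)) x ∈ S i :=
    fun i => VeechAux.Sres_invariant n m d hdn hdm α hflo _
  have hdisj : ∀ i j : Fin d, i ≠ j → Disjoint (S i) (S j) := by
    intro i j hij
    rw [Set.disjoint_left]
    rintro p ⟨hp1, hp2⟩ ⟨hq1, hq2⟩
    apply hij
    have hval : ((i.val : ℕ) : ZMod d) = ((j.val : ℕ) : ZMod d) :=
      sub_right_injective (hp2.symm.trans hq2)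
    have h1 := ZMod.val_cast_of_lt i.isLt
    have h2 := ZMod.val_cast_of_lt j.isLt
    apply Fin.ext
    rw [← h1, ← h2, hval]
  have hunion : (⋃ i, S i) = (Set.univ : Set (ZMod n)) ×ˢ Set.Ico (0 : ℝ) 1 := by
    ext p
    simp only [Set.mem_iUnion, Set.mem_prod, Set.mem_univ, true_and]
    constructor
    · rintro ⟨i, hi⟩; exact hi.1
    · intro hp
      refine ⟨⟨(ZMod.castHom hdn (ZMod d) p.1
        - ((VeechAux.Phi m α p.2 : ℤ) : ZMod d)).val, ZMod.val_lt _⟩, hp, ?_⟩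
      show ((VeechAux.Phi m α p.2 : ℤ) : ZMod d) = _
      rw [ZMod.natCast_rightInverse (ZMod.castHom hdn (ZMod d) p.1
        - ((VeechAux.Phi m α p.2 : ℤ) : ZMod d))]
      ring
  have hcard : (Measure.count : Measure (ZMod n)) Set.univ = (n : ℝ≥0∞) := by
    rw [← Finset.coe_univ, Measure.count_apply_finset]
    simp [Finset.card_univ, ZMod.card]
  have htotal : veechMeasure n ((Set.univ : Set (ZMod n)) ×ˢ Set.Ico (0 : ℝ) 1)
      = (n : ℝ≥0∞) := by
    unfold veechMeasure
    rw [Measure.prod_prod, hcard, Measure.restrict_apply_self, Real.volume_Ico]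
    simp
  have hSv : ∀ i : Fin d, veechMeasure n (S i)
      = veechMeasure n (VeechAux.Sres n m d hdn α 0) :=
    fun i => VeechAux.measure_Sres_const n m d hdn α _
  have hsum : ∑' i : Fin d, veechMeasure n (S i) = (n : ℝ≥0∞) := by
    rw [← measure_iUnion (fun i j hij => hdisj i j hij) hmeas, hunion, htotal]
  have hdv : (d : ℝ≥0∞) * veechMeasure n (VeechAux.Sres n m d hdn α 0) = (n : ℝ≥0∞) := by
    rw [← hsum, tsum_fintype]
    rw [Finset.sum_congr rfl (fun i _ => hSv i), Finset.sum_const, Finset.card_univ]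
    simp [nsmul_eq_mul]
  have hveq : veechMeasure n (VeechAux.Sres n m d hdn α 0) = (n : ℝ≥0∞) / (d : ℝ≥0∞) :=
    (ENNReal.eq_div_iff (by exact_mod_cast hd0.ne') (by simp)).mpr hdv
  have hmeasS : ∀ i, veechMeasure n (S i) = (n : ENNReal) / (d : ENNReal) :=
    fun i => (hSv i).trans hveq
  refine ⟨⟨S, hmeas, hdisj, hunion, hinv, hmeasS⟩, ?_, ?_⟩
  · -- non-ergodicity
    intro H
    have h := H (S ⟨0, hd0⟩) (hmeas _) (hinv _)
    rw [hmeasS] at h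
    rcases h with h | h
    · rw [ENNReal.div_eq_zero_iff] at h
      rcases h with h | h
      · exact absurd h (by exact_mod_cast (by omega : n ≠ 0))
      · simp at h
    · have hlt : (n : ℝ≥0∞) / (d : ℝ≥0∞) < (n : ℝ≥0∞) := by
        calc (n : ℝ≥0∞) / (d : ℝ≥0∞) ≤ (n : ℝ≥0∞) / 2 :=
              ENNReal.div_le_div_left (by exact_mod_cast (by omega : (2 : ℕ) ≤ d)) _
          _ < (n : ℝ≥0∞) := ENNReal.half_lt_self
              (by exact_mod_cast (by omega : n ≠ 0)) (by simp)
      exact hlt.ne h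
  · -- no orbit is equidistributed
    intro x hx heq
    have hxS : x ∈ VeechAux.Sres n m d hdn α
        (ZMod.castHom hdn (ZMod d) x.1 - ((VeechAux.Phi m α x.2 : ℤ) : ZMod d)) :=
      ⟨hx, by ring⟩
    set r : ZMod d := ZMod.castHom hdn (ZMod d) x.1
      - ((VeechAux.Phi m α x.2 : ℤ) : ZMod d) with hrdef
    have horb : ∀ j : ℕ,
        (veechT n α (Int.fract ((m : ℝ) * α)))^[j] x ∈ VeechAux.Sres n m d hdn α r := by
      intro j
      induction j with
      | zero => simpa using hxS
      | succ j ih =>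
        rw [Function.iterate_succ_apply']
        exact VeechAux.Sres_invariant n m d hdn hdm α hflo r _ ih
    have hne : (Finset.Icc 1 (m - 1)).Nonempty := ⟨1, by simp; omega⟩
    have Fne : ((Finset.Icc 1 (m - 1)).image
        (fun q : ℕ => Int.fract ((q : ℝ) * α))).Nonempty := hne.image _
    set ε := ((Finset.Icc 1 (m - 1)).image
        (fun q : ℕ => Int.fract ((q : ℝ) * α))).min' Fne with hε
    obtain ⟨q0, hq0, hq0e⟩ := Finset.mem_image.mp (Finset.min'_mem _ Fne)
    have hq01 : 1 ≤ q0 := (Finset.mem_Icc.mp hq0).1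
    have hεpos : 0 < ε := by
      rw [hε, ← hq0e]
      exact lt_of_le_of_ne (Int.fract_nonneg _)
        (Ne.symm (VeechAux.fract_ne_zero m α hirr q0 hq01))
    have hεlt1 : ε < 1 := by rw [hε, ← hq0e]; exact Int.fract_lt_one _
    have hsmall : ∀ q : ℕ, 1 ≤ q → q < m → ε ≤ Int.fract ((q : ℝ) * α) := by
      intro q h1q h2q
      rw [hε]
      exact Finset.min'_le _ _
        (Finset.mem_image.mpr ⟨q, Finset.mem_Icc.mpr ⟨h1q, by omega⟩, rfl⟩)
    have hℓ : ∃ ℓ : ZMod n,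
        ZMod.castHom hdn (ZMod d) ℓ ≠ ((VeechAux.Phi m α 0 : ℤ) : ZMod d) + r := by
      by_contra hco
      push_neg at hco
      have e0 := hco 0
      have e1 := hco 1
      rw [map_zero] at e0
      rw [map_one] at e1
      exact zero_ne_one (e0.trans e1.symm)
    obtain ⟨ℓ, hℓne⟩ := hℓ
    have htend := heq ℓ 0 ε le_rfl hεpos.le hεlt1.le
    have hzero : ∀ N j : ℕ, ¬ (((veechT n α (Int.fract ((m : ℝ) * α)))^[j] x).1 = ℓ ∧
        ((veechT n α (Int.fract ((m : ℝ) * α)))^[j] x).2 ∈ Set.Ico (0 : ℝ) ε) := by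
      rintro N j ⟨hj1, hj2⟩
      obtain ⟨hIco, hres⟩ := horb j
      have hphieq : VeechAux.Phi m α (((veechT n α (Int.fract ((m : ℝ) * α)))^[j] x).2)
          = VeechAux.Phi m α 0 := by
        apply VeechAux.phi_eq_of_small m α hirr hj2.1 (lt_trans hj2.2 hεlt1)
        intro q h1q h2q
        exact lt_of_lt_of_le hj2.2 (hsmall q h1q h2q)
      rw [hphieq, hj1] at hres
      exact hℓne (by rw [hres]; ring)
    have htend0 : Filter.Tendsto (fun _ : ℕ => (0 : ℝ)) Filter.atTop
        (nhds ((ε - 0) / (n : ℝ))) := by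
      refine htend.congr fun N => ?_
      rw [Finset.filter_false_of_mem (fun j _ => hzero N j)]
      simp
    have huniq : (ε - 0) / (n : ℝ) = 0 := tendsto_nhds_unique htend0 tendsto_const_nhds
    rw [sub_zero] at huniq
    exact (div_pos hεpos (by exact_mod_cast (by omega : 0 < n))).ne' huniq
end

section
/- Let α ∈ (0,1) be irrational, let n ≥ 2 and m ≥ 2 be integers, let S_0 ⊆ [0,n) be Lebesgue measurable, and let 0 < ε < 1/100. For each integer k ≥ 1 set d*_k = 1 − max{ {qα} : −1 ≤ q ≤ q_{k+1}−2, q ≠ 0 } and d**_k = min{ {qα} : −1 ≤ q ≤ q_{k+1}−2, q ≠ 0 }, and for m ≤ q ≤ q_{k+1}−2 let J_k(q) = ({qα} − d**_k, {qα} + d*_k). Then there is a threshold K such that for every k ≥ K there exists an integer q* with m ≤ q* ≤ q_{k+1}−2 such that for each ℓ = 0,1,…,n−1, either λ((ℓ+J_k(q*)) ∩ S_0) > (1−ε)·λ(J_k(q*)) or λ((ℓ+J_k(q*)) ∩ S_0) < ε·λ(J_k(q*)), where λ denotes one-dimensional Lebesgue measure and ℓ+J_k(q*) is the translate of the interval J_k(q*)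 by ℓ. -/
open scoped Classical
open MeasureTheory

/-- Iterates of the Gauss map starting at `α`. -/
noncomputable def gaussIter (α : ℝ) : ℕ → ℝ
  | 0 => α
  | k + 1 => Int.fract (1 / gaussIter α k)

/-- For `α ∈ (0,1)` irrational, `cfDigit α i` is the `i`-th digit `a_i` (for `i ≥ 1`)
of the continued fraction expansion `α = [a_1, a_2, a_3, …]`. -/
noncomputable def cfDigit (α : ℝ) (i : ℕ) : ℕ :=
  (⌊1 / gaussIter α (i - 1)⌋).toNat

/-- The denominators `q_k` of the convergents of `α`. -/
noncomputable def qDen (α : ℝ) : ℕ → ℕ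
  | 0 => 1
  | 1 => cfDigit α 1
  | k + 2 => cfDigit α (k + 2) * qDen α (k + 1) + qDen α k

/-- `d*_k = 1 − max{ {qα} : −1 ≤ q ≤ q_{k+1}−2, q ≠ 0 }`: the gap immediately below
`0` in the partition of the circle by the points `{qα}`, `−1 ≤ q ≤ q_{k+1}−2`. -/
noncomputable def dStar (α : ℝ) (k : ℕ) : ℝ :=
  1 - sSup {x : ℝ | ∃ q : ℤ, -1 ≤ q ∧ q ≤ (qDen α (k + 1) : ℤ) - 2 ∧ q ≠ 0 ∧
    x = Int.fract ((q : ℝ) * α)}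

/-- `d**_k = min{ {qα} : −1 ≤ q ≤ q_{k+1}−2, q ≠ 0 }`: the gap immediately above `0`. -/
noncomputable def dStarStar (α : ℝ) (k : ℕ) : ℝ :=
  sInf {x : ℝ | ∃ q : ℤ, -1 ≤ q ∧ q ≤ (qDen α (k + 1) : ℤ) - 2 ∧ q ≠ 0 ∧
    x = Int.fract ((q : ℝ) * α)}

/-- The short special interval `J_k(q) = ({qα} − d**_k, {qα} + d*_k)`. -/
noncomputable def shortInterval (α : ℝ) (k q : ℕ) : Set ℝ :=
  Set.Ioo (Int.fract ((q : ℝ) * α) - dStarStar α k) (Int.fract ((q : ℝ) * α) + dStar α k)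

/-!
By Lebesgue's density theorem, for almost every `c` the proportion of `S₀` in the interval of
length `d` centred at `c` tends to `0` or `1` as `d → 0`. Hence the set `W_k` of centres at which
this proportion, at scale `δ_k = d*_k + d**_k = λ(J_k(q))`, lies in `[ε/2, 1 - ε/2]` has measure
tending to `0`; indeed `δ_k → 0`, since `{q_{k-1} α}` and `{q_k α}` lie on opposite sides of `0`
at distances `‖q_{k-1} α‖, ‖q_k α‖ → 0`.

The intervals `J_k(q)`, `m ≤ q ≤ q_{k+1} - 2`, are translates of one interval by the points
`{qα}`, which by the best approximation property of convergents are pairwise at least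
`‖q_k α‖ ≥ 1 / (2 q_{k+1})` apart; there are at least `q_{k+1} / 2` of them. If a translate
`ℓ + J_k(q)` meets `S₀` in a proportion in `[ε, 1 - ε]`, then, the proportion being Lipschitz in
the centre, the ball of diameter `ε ‖q_k α‖` around the centre of `ℓ + J_k(q)` lies in `W_k`.
For fixed `ℓ` these balls are disjoint, so not every `q` is bad once `n λ(W_k) < ε / 4`.
-/

open Set Filter Topology Metric
open scoped ENNReal

section LocalMass

variable (S : Set ℝ)

noncomputable def localMass (d c : ℝ) : ℝ := (volume (S ∩ closedBall c (d / 2))).toReal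

def intermediateDensitySet (η d : ℝ) : Set ℝ :=
  {c | η * d ≤ localMass S d c ∧ localMass S d c ≤ (1 - η) * d}

variable {S}

theorem volume_inter_closedBall_ne_top (c r : ℝ) : volume (S ∩ closedBall c r) ≠ ∞ :=
  ((measure_mono inter_subset_right).trans_lt measure_closedBall_lt_top).ne

theorem volume_inter_closedBall_le {r : ℝ} (hr : 0 ≤ r) (c c' : ℝ) :
    volume (S ∩ closedBall c r)
      ≤ volume (S ∩ closedBall c' r) + ENNReal.ofReal (2 * dist c c') := by
  have hsub : closedBall c' r ⊆ closedBall c' (r + dist c c') :=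
    closedBall_subset_closedBall (le_add_of_nonneg_right dist_nonneg)
  calc volume (S ∩ closedBall c r)
      ≤ volume (S ∩ closedBall c' (r + dist c c')) :=
        measure_mono (inter_subset_inter_right _ (closedBall_subset_closedBall' le_rfl))
    _ ≤ volume (S ∩ closedBall c' r ∪ closedBall c' (r + dist c c') \ closedBall c' r) :=
        measure_mono fun x hx => by by_cases h : x ∈ closedBall c' r <;> simp_all
    _ ≤ volume (S ∩ closedBall c' r) + volume (closedBall c' (r + dist c c') \ closedBall c' r) :=
        measure_union_le _ _
    _ = volume (S ∩ closedBall c' r) + ENNReal.ofReal (2 * dist c c') := by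
        rw [measure_sdiff hsub measurableSet_closedBall.nullMeasurableSet
          measure_closedBall_lt_top.ne, Real.volume_closedBall, Real.volume_closedBall,
          ← ENNReal.ofReal_sub _ (by positivity)]
        ring_nf

theorem lipschitzWith_localMass (d : ℝ) : LipschitzWith 2 (localMass S d) := by
  rcases lt_or_ge (d / 2) 0 with hd | hd
  · have : localMass S d = fun _ => 0 :=
      funext fun c => by simp [localMass, closedBall_eq_empty.2 hd]
    exact this ▸ LipschitzWith.const' 0
  refine LipschitzWith.of_dist_le_mul fun c c' => ?_
  have key : ∀ c c', localMass S d c ≤ localMass S d c' + 2 * dist c c' := fun c c' => by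
    have := ENNReal.toReal_mono
      (ENNReal.add_ne_top.2 ⟨volume_inter_closedBall_ne_top c' _, ENNReal.ofReal_ne_top⟩)
      (volume_inter_closedBall_le (S := S) hd c c')
    rwa [ENNReal.toReal_add (volume_inter_closedBall_ne_top c' _) ENNReal.ofReal_ne_top,
      ENNReal.toReal_ofReal (by positivity)] at this
  have h₁ := key c c'
  have h₂ := key c' c
  rw [dist_comm c' c] at h₂
  rw [NNReal.coe_ofNat, Real.dist_eq, abs_sub_le_iff]
  constructor <;> linarith

theorem isClosed_intermediateDensitySet (η d : ℝ) : IsClosed (intermediateDensitySet S η d) :=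
  have hc := (lipschitzWith_localMass (S := S) d).continuous
  (isClosed_le continuous_const hc).inter (isClosed_le hc continuous_const)

theorem intermediateDensitySet_subset_Icc {a b η d : ℝ} (hS : S ⊆ Icc a b) (hη : 0 < η)
    (hd : 0 < d) : intermediateDensitySet S η d ⊆ Icc (a - d / 2) (b + d / 2) := by
  intro c hc
  obtain ⟨x, hxS, hx⟩ : (S ∩ closedBall c (d / 2)).Nonempty := by
    refine nonempty_iff_ne_empty.2 fun h => ?_
    have := hc.1
    rw [localMass, h, measure_empty, ENNReal.toReal_zero] at this
    nlinarith
  rw [Real.closedBall_eq_Icc] at hx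
  have := hS hxS
  constructor <;> linarith [hx.1, hx.2, this.1, this.2]

theorem ae_tendsto_localMass_div (hS : MeasurableSet S) :
    ∀ᵐ c, Tendsto (fun d => localMass S d c / d) (𝓝[>] 0) (𝓝 (S.indicator 1 c)) := by
  filter_upwards [Besicovitch.ae_tendsto_measure_inter_div_of_measurableSet volume hS] with c hc
  have hfin : S.indicator (1 : ℝ → ℝ≥0∞) c ≠ ⊤ := by by_cases h : c ∈ S <;> simp [h]
  have hind : (S.indicator (1 : ℝ → ℝ≥0∞) c).toReal = S.indicator 1 c := by
    by_cases h : c ∈ S <;> simp [h]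
  have hhalf : Tendsto (fun d : ℝ => d / 2) (𝓝[>] 0) (𝓝[>] 0) := by
    simp_rw [div_eq_inv_mul]
    exact tendsto_comap.mono_left (comap_mulLeft_nhdsGT_zero (by norm_num)).ge
  have hlim := (ENNReal.tendsto_toReal hfin).comp (hc.comp hhalf)
  rw [hind] at hlim
  refine hlim.congr' (eventually_mem_nhdsWithin.mono fun d (hd : 0 < d) => ?_)
  rw [Function.comp_apply, Function.comp_apply, ENNReal.toReal_div, Real.volume_closedBall,
    ENNReal.toReal_ofReal (by positivity), mul_div_cancel₀ _ two_ne_zero]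
  rfl

theorem ae_eventually_notMem_intermediateDensitySet (hS : MeasurableSet S) {η : ℝ} (hη : 0 < η)
    {d : ℕ → ℝ} (hd : Tendsto d atTop (𝓝[>] 0)) :
    ∀ᵐ c, ∀ᶠ k in atTop, c ∉ intermediateDensitySet S η (d k) := by
  filter_upwards [ae_tendsto_localMass_div hS] with c hc
  have hlim := hc.comp hd
  have hpos : ∀ᶠ k in atTop, 0 < d k := hd self_mem_nhdsWithin
  by_cases hcS : c ∈ S
  · rw [indicator_of_mem hcS, Pi.one_apply] at hlim
    filter_upwards [hlim.eventually (lt_mem_nhds (show 1 - η < (1 : ℝ) by linarith)), hpos]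
      with k hk hdk hmem
    rw [Function.comp_apply, lt_div_iff₀ hdk] at hk
    linarith [hmem.2]
  · rw [indicator_of_notMem hcS] at hlim
    filter_upwards [hlim.eventually (gt_mem_nhds hη), hpos] with k hk hdk hmem
    rw [Function.comp_apply, div_lt_iff₀ hdk] at hk
    linarith [hmem.1]

theorem tendsto_volume_intermediateDensitySet (hS : MeasurableSet S) {a b : ℝ}
    (hSab : S ⊆ Icc a b) {η : ℝ} (hη : 0 < η) {d : ℕ → ℝ} (hd : Tendsto d atTop (𝓝[>] 0)) :
    Tendsto (fun k => volume (intermediateDensitySet S η (d k))) atTop (𝓝 0) := by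
  have hsub : ∀ᶠ k in atTop, intermediateDensitySet S η (d k) ⊆ Icc (a - 1) (b + 1) :=
    Eventually.mono (hd (Ioo_mem_nhdsGT two_pos)) fun k hk =>
      (intermediateDensitySet_subset_Icc hSab hη hk.1).trans
        (Icc_subset_Icc (by linarith [hk.2]) (by linarith [hk.2]))
  simpa using tendsto_measure_of_ae_tendsto_indicator atTop MeasurableSet.empty
    (fun k => (isClosed_intermediateDensitySet η (d k)).measurableSet) measurableSet_Icc
    (by rw [Real.volume_Icc]; exact ENNReal.ofReal_ne_top) hsub
    (by simpa using ae_eventually_notMem_intermediateDensitySet hS hη hd)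

theorem closedBall_subset_intermediateDensitySet {η d ρ c : ℝ} (hρ : ρ ≤ η * d)
    (hc : 2 * η * d ≤ localMass S d c ∧ localMass S d c ≤ (1 - 2 * η) * d) :
    closedBall c (ρ / 2) ⊆ intermediateDensitySet S η d := by
  intro x hx
  have := (lipschitzWith_localMass (S := S) d).dist_le_mul x c
  rw [Real.dist_eq, Real.dist_eq, NNReal.coe_ofNat, abs_sub_le_iff] at this
  rw [mem_closedBall, Real.dist_eq] at hx
  constructor <;> linarith

end LocalMass

theorem card_mul_le_volume_of_pairwise_le_dist {ι : Type*} {G : Finset ι} {x : ι → ℝ} {ρ : ℝ}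
    {W : Set ℝ} (hsep : (G : Set ι).Pairwise fun i j => ρ ≤ dist (x i) (x j))
    (hW : ∀ i ∈ G, ball (x i) (ρ / 2) ⊆ W) : G.card * ENNReal.ofReal ρ ≤ volume W :=
  calc G.card * ENNReal.ofReal ρ = ∑ i ∈ G, volume (ball (x i) (ρ / 2)) := by
        simp [Real.volume_ball, mul_div_cancel₀]
    _ = volume (⋃ i ∈ G, ball (x i) (ρ / 2)) :=
        (measure_biUnion_finset
          (fun i hi j hj hij => ball_disjoint_ball (by linarith [hsep hi hj hij]))
          fun _ _ => measurableSet_ball).symm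
    _ ≤ volume W := measure_mono (iUnion₂_subset hW)

theorem exists_forall_not_ball_subset {ι : Type*} {F : Finset ι} {c : ι → ℝ} {ρ : ℝ}
    {W : Set ℝ} (n : ℕ) (hsep : (F : Set ι).Pairwise fun i j => ρ ≤ dist (c i) (c j))
    (hW : n * volume W < F.card * ENNReal.ofReal ρ) :
    ∃ i ∈ F, ∀ ℓ < n, ¬ ball (ℓ + c i) (ρ / 2) ⊆ W := by
  by_contra! h
  let bad (ℓ : ℕ) : Finset ι := F.filter fun i => ball (ℓ + c i) (ρ / 2) ⊆ W
  have hcover : F ⊆ (Finset.range n).biUnion bad := fun i hi => by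
    obtain ⟨ℓ, hℓ, hsub⟩ := h i hi
    exact Finset.mem_biUnion.2 ⟨ℓ, Finset.mem_range.2 hℓ, Finset.mem_filter.2 ⟨hi, hsub⟩⟩
  have hbad (ℓ : ℕ) : (bad ℓ).card * ENNReal.ofReal ρ ≤ volume W :=
    card_mul_le_volume_of_pairwise_le_dist
      (fun i hi j hj hij => by
        simpa [Real.dist_eq] using hsep (Finset.mem_filter.1 hi).1 (Finset.mem_filter.1 hj).1 hij)
      fun i hi => (Finset.mem_filter.1 hi).2
  refine hW.not_ge ?_
  calc (F.card : ℝ≥0∞) * ENNReal.ofReal ρ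
      ≤ (∑ ℓ ∈ Finset.range n, (bad ℓ).card : ℕ) * ENNReal.ofReal ρ := by
        gcongr
        exact (Finset.card_le_card hcover).trans Finset.card_biUnion_le
    _ = ∑ ℓ ∈ Finset.range n, (bad ℓ).card * ENNReal.ofReal ρ := by
        push_cast
        rw [Finset.sum_mul]
    _ ≤ ∑ ℓ ∈ Finset.range n, volume W := Finset.sum_le_sum fun ℓ _ => hbad ℓ
    _ = n * volume W := by simp

noncomputable def pNum (α : ℝ) : ℕ → ℤ
  | 0 => 0
  | 1 => 1
  | k + 2 => (cfDigit α (k + 2) : ℤ) * pNum α (k + 1) + pNum α k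

/-- `gaussProd α k = ‖q_k α‖ = |q_k α - p_k|`, see `qDen_mul_sub_pNum`. -/
noncomputable def gaussProd (α : ℝ) (k : ℕ) : ℝ :=
  ∏ j ∈ Finset.range (k + 1), gaussIter α j

theorem qDen_add_two (α : ℝ) (k : ℕ) :
    qDen α (k + 2) = cfDigit α (k + 2) * qDen α (k + 1) + qDen α k := rfl

theorem pNum_add_two (α : ℝ) (k : ℕ) :
    pNum α (k + 2) = cfDigit α (k + 2) * pNum α (k + 1) + pNum α k := rfl

theorem qDen_succ_mul_pNum_sub (α : ℝ) (k : ℕ) :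
    (qDen α (k + 1) : ℤ) * pNum α k - qDen α k * pNum α (k + 1) = (-1) ^ (k + 1) := by
  induction k with
  | zero => simp [qDen, pNum]
  | succ k ih =>
    rw [qDen_add_two, pNum_add_two]
    push_cast
    linear_combination -ih

theorem exists_eq_qDen_pNum_combination (α : ℝ) (k : ℕ) (q p : ℤ) : ∃ x y : ℤ,
    q = x * qDen α k + y * qDen α (k + 1) ∧ p = x * pNum α k + y * pNum α (k + 1) := by
  have hdet := qDen_succ_mul_pNum_sub α k
  have hsq : ((-1 : ℤ) ^ (k + 1)) ^ 2 = 1 := by rw [← pow_mul, pow_mul', neg_one_sq, one_pow]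
  refine ⟨(-1) ^ (k + 1) * (p * qDen α (k + 1) - q * pNum α (k + 1)),
    (-1) ^ (k + 1) * (q * pNum α k - p * qDen α k), ?_, ?_⟩
  · linear_combination (-(-1) ^ (k + 1) * q) * hdet - q * hsq
  · linear_combination (-(-1) ^ (k + 1) * p) * hdet - p * hsq

theorem gaussProd_zero (α : ℝ) : gaussProd α 0 = α := by
  simp [gaussProd, gaussIter]

theorem gaussProd_succ (α : ℝ) (k : ℕ) :
    gaussProd α (k + 1) = gaussProd α k * gaussIter α (k + 1) :=
  Finset.prod_range_succ _ _

/-- `dStar α k = 1 - sSup (orbitPoints α k)` and `dStarStar α k = sInf (orbitPoints α k)`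
definitionally. -/
def orbitPoints (α : ℝ) (k : ℕ) : Set ℝ :=
  {x : ℝ | ∃ q : ℤ, -1 ≤ q ∧ q ≤ (qDen α (k + 1) : ℤ) - 2 ∧ q ≠ 0 ∧
    x = Int.fract ((q : ℝ) * α)}

theorem orbitPoints_finite (α : ℝ) (k : ℕ) : (orbitPoints α k).Finite := by
  refine ((Set.finite_Icc (-1 : ℤ) (qDen α (k + 1) - 2)).image
    fun q : ℤ => Int.fract ((q : ℝ) * α)).subset ?_
  rintro _ ⟨q, h1, h2, -, rfl⟩
  exact ⟨q, ⟨h1, h2⟩, rfl⟩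

theorem dStarStar_le_of_mem {α : ℝ} {k : ℕ} {x : ℝ} (hx : x ∈ orbitPoints α k) :
    dStarStar α k ≤ x :=
  csInf_le (orbitPoints_finite α k).bddBelow hx

theorem dStar_le_of_mem {α : ℝ} {k : ℕ} {x : ℝ} (hx : x ∈ orbitPoints α k) :
    dStar α k ≤ 1 - x :=
  sub_le_sub_left (le_csSup (orbitPoints_finite α k).bddAbove hx) 1

noncomputable def shortCenter (α : ℝ) (k q : ℕ) : ℝ :=
  Int.fract ((q : ℝ) * α) + (dStar α k - dStarStar α k) / 2

theorem image_const_add_shortInterval (α : ℝ) (k q : ℕ) (ℓ : ℝ) :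
    (fun x => ℓ + x) '' shortInterval α k q
      = ball (ℓ + shortCenter α k q) ((dStar α k + dStarStar α k) / 2) := by
  rw [shortInterval, image_const_add_Ioo, Real.ball_eq_Ioo, shortCenter]
  congr 1 <;> ring

theorem volume_image_const_add_shortInterval_inter (S : Set ℝ) (α : ℝ) (k q : ℕ) (ℓ : ℝ) :
    (volume ((fun x => ℓ + x) '' shortInterval α k q ∩ S)).toReal
      = localMass S (dStar α k + dStarStar α k) (ℓ + shortCenter α k q) := by
  rw [image_const_add_shortInterval, localMass, inter_comm, Real.ball_eq_Ioo,
    Real.closedBall_eq_Icc, measure_congr ((ae_eq_refl S).inter Ioo_ae_eq_Icc)]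

theorem volume_shortInterval {α : ℝ} {k : ℕ} (h : 0 ≤ dStar α k + dStarStar α k) (q : ℕ) :
    (volume (shortInterval α k q)).toReal = dStar α k + dStarStar α k := by
  rw [shortInterval, Real.volume_Ioo, ENNReal.toReal_ofReal (by linarith)]
  ring

section ContinuedFraction

variable {α : ℝ} (hirr : Irrational α) (hα : α ∈ Ioo 0 1)
include hirr hα

theorem irrational_gaussIter_and_mem_Ioo (k : ℕ) :
    Irrational (gaussIter α k) ∧ gaussIter α k ∈ Ioo 0 1 := by
  induction k with
  | zero => exact ⟨hirr, hα⟩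
  | succ k ih =>
    have hinv : Irrational (1 / gaussIter α k) := by
      rw [one_div]
      exact ih.1.inv
    refine ⟨hinv.sub_intCast _, Int.fract_pos.2 (hinv.ne_int _), Int.fract_lt_one _⟩

theorem gaussIter_pos (k : ℕ) : 0 < gaussIter α k :=
  (irrational_gaussIter_and_mem_Ioo hirr hα k).2.1

theorem gaussIter_lt_one (k : ℕ) : gaussIter α k < 1 :=
  (irrational_gaussIter_and_mem_Ioo hirr hα k).2.2

theorem one_le_floor_one_div_gaussIter (k : ℕ) : 1 ≤ ⌊1 / gaussIter α k⌋ := by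
  rw [Int.le_floor, Int.cast_one, le_div_iff₀ (gaussIter_pos hirr hα k), one_mul]
  exact (gaussIter_lt_one hirr hα k).le

theorem cfDigit_succ_eq_floor (k : ℕ) : (cfDigit α (k + 1) : ℤ) = ⌊1 / gaussIter α k⌋ := by
  have := one_le_floor_one_div_gaussIter hirr hα k
  simp only [cfDigit, Nat.add_sub_cancel]
  omega

theorem one_le_cfDigit (k : ℕ) : 1 ≤ cfDigit α (k + 1) := by
  have := one_le_floor_one_div_gaussIter hirr hα k
  have := cfDigit_succ_eq_floor hirr hα k
  omega

theorem gaussIter_succ (k : ℕ) :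
    gaussIter α (k + 1) = 1 / gaussIter α k - cfDigit α (k + 1) := by
  rw [show gaussIter α (k + 1) = Int.fract (1 / gaussIter α k) from rfl, Int.fract,
    ← cfDigit_succ_eq_floor hirr hα k, Int.cast_natCast]

theorem gaussProd_one : gaussProd α 1 = 1 - cfDigit α 1 * α := by
  rw [gaussProd_succ, gaussProd_zero, gaussIter_succ hirr hα 0,
    show gaussIter α 0 = α from rfl]
  field_simp [hα.1.ne']

theorem gaussProd_add_two (k : ℕ) :
    gaussProd α (k + 2) = gaussProd α k - cfDigit α (k + 2) * gaussProd α (k + 1) := by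
  rw [gaussProd_succ, gaussProd_succ, gaussIter_succ hirr hα (k + 1)]
  field_simp [(gaussIter_pos hirr hα (k + 1)).ne']

theorem gaussProd_pos (k : ℕ) : 0 < gaussProd α k :=
  Finset.prod_pos fun j _ => gaussIter_pos hirr hα j

theorem gaussProd_strictAnti : StrictAnti (gaussProd α) := by
  refine strictAnti_nat_of_succ_lt fun k => ?_
  rw [gaussProd_succ]
  exact mul_lt_of_lt_one_right (gaussProd_pos hirr hα k) (gaussIter_lt_one hirr hα _)

theorem gaussProd_lt_one (k : ℕ) : gaussProd α k < 1 :=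
  ((gaussProd_strictAnti hirr hα).antitone k.zero_le).trans_lt
    ((gaussProd_zero α).trans_lt hα.2)

theorem qDen_mul_sub_pNum (k : ℕ) :
    (qDen α k : ℝ) * α - pNum α k = (-1) ^ k * gaussProd α k := by
  induction k using Nat.twoStepInduction with
  | zero => simp [qDen, pNum, gaussProd_zero]
  | one => simp [qDen, pNum, gaussProd_one hirr hα]
  | more k ih ih' =>
    rw [qDen_add_two, pNum_add_two, gaussProd_add_two hirr hα]
    push_cast
    linear_combination (cfDigit α (k + 2) : ℝ) * ih' + ih

theorem qDen_succ_mul_gaussProd_add (k : ℕ) :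
    qDen α (k + 1) * gaussProd α k + qDen α k * gaussProd α (k + 1) = 1 := by
  induction k with
  | zero => simp [qDen, gaussProd_zero, gaussProd_one hirr hα]
  | succ k ih =>
    rw [qDen_add_two, gaussProd_add_two hirr hα]
    push_cast
    linear_combination ih

theorem qDen_add_le (k : ℕ) : qDen α (k + 1) + qDen α k ≤ qDen α (k + 2) := by
  rw [qDen_add_two]
  have := one_le_cfDigit hirr hα (k + 1)
  nlinarith

theorem qDen_pos (k : ℕ) : 0 < qDen α k := by
  induction k using Nat.twoStepInduction with
  | zero => exact Nat.one_pos
  | one => exact one_le_cfDigit hirr hα 0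
  | more k ih _ => exact ih.trans_le ((Nat.le_add_left _ _).trans (qDen_add_le hirr hα k))

theorem strictMono_qDen_succ : StrictMono fun k => qDen α (k + 1) :=
  strictMono_nat_of_lt_succ fun k =>
    (Nat.lt_add_of_pos_right (qDen_pos hirr hα k)).trans_le (qDen_add_le hirr hα k)

theorem le_qDen_succ (k : ℕ) : k ≤ qDen α (k + 1) :=
  (strictMono_qDen_succ hirr hα).id_le k

theorem two_le_qDen {k : ℕ} (hk : 2 ≤ k) : 2 ≤ qDen α k := by
  obtain ⟨j, rfl⟩ := Nat.exists_eq_add_of_le' hk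
  have := qDen_pos hirr hα 1
  have : qDen α 1 < qDen α (j + 2) := strictMono_qDen_succ hirr hα (Nat.succ_pos j)
  omega

theorem qDen_le_qDen_succ (k : ℕ) : qDen α k ≤ qDen α (k + 1) := by
  cases k with
  | zero => exact qDen_pos hirr hα 1
  | succ k => exact ((strictMono_qDen_succ hirr hα) k.lt_succ_self).le

theorem gaussProd_le_inv_qDen_succ (k : ℕ) : gaussProd α k ≤ (qDen α (k + 1) : ℝ)⁻¹ := by
  have := qDen_succ_mul_gaussProd_add hirr hα k
  have := mul_pos (Nat.cast_pos.2 (qDen_pos hirr hα k)) (gaussProd_pos hirr hα (k + 1))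
  rw [← one_div, le_div_iff₀ (Nat.cast_pos.2 (qDen_pos hirr hα _))]
  linarith

theorem inv_two_mul_qDen_succ_le_gaussProd (k : ℕ) :
    (2 * qDen α (k + 1) : ℝ)⁻¹ ≤ gaussProd α k := by
  have := qDen_succ_mul_gaussProd_add hirr hα k
  have : (qDen α k : ℝ) * gaussProd α (k + 1) ≤ qDen α (k + 1) * gaussProd α k :=
    mul_le_mul (by exact_mod_cast qDen_le_qDen_succ hirr hα k)
      (gaussProd_strictAnti hirr hα k.lt_succ_self).le (gaussProd_pos hirr hα _).le
      (Nat.cast_nonneg _)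
  rw [← one_div, div_le_iff₀ (by have := qDen_pos hirr hα (k + 1); positivity)]
  linarith

theorem abs_qDen_mul_sub_pNum (k : ℕ) : |(qDen α k : ℝ) * α - pNum α k| = gaussProd α k := by
  rw [qDen_mul_sub_pNum hirr hα, abs_mul, abs_pow, abs_neg, abs_one, one_pow, one_mul,
    abs_of_pos (gaussProd_pos hirr hα k)]

theorem qDen_mul_sub_pNum_mul_succ_neg (k : ℕ) :
    ((qDen α k : ℝ) * α - pNum α k) * ((qDen α (k + 1) : ℝ) * α - pNum α (k + 1)) < 0 := by
  rw [qDen_mul_sub_pNum hirr hα, qDen_mul_sub_pNum hirr hα, pow_succ]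
  have := mul_pos (gaussProd_pos hirr hα k) (gaussProd_pos hirr hα (k + 1))
  have : ((-1 : ℝ) ^ k) ^ 2 = 1 := by rw [← pow_mul, pow_mul', neg_one_sq, one_pow]
  nlinarith

/-- Write `q = x q_k + y q_{k+1}`, `p = x p_k + y p_{k+1}`: then `x ≠ 0`, and `x, y` have opposite
signs, as do `θ_k = q_k α - p_k` and `θ_{k+1}`, so `|qα - p| = |x θ_k| + |y θ_{k+1}| ≥ |θ_k|`. -/
theorem gaussProd_le_abs_mul_sub {k : ℕ} {q : ℤ} (hq0 : q ≠ 0) (hq : |q| < qDen α (k + 1))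
    (p : ℤ) : gaussProd α k ≤ |q * α - p| := by
  obtain ⟨x, y, rfl, rfl⟩ := exists_eq_qDen_pNum_combination α k q p
  have hQ : (0 : ℤ) < qDen α k := by exact_mod_cast qDen_pos hirr hα k
  rw [abs_lt] at hq
  have hx : x ≠ 0 := by
    rintro rfl
    rcases lt_trichotomy y 0 with hy | rfl | hy
    · nlinarith
    · simp at hq0
    · nlinarith
  have hxy : x * y ≤ 0 := by
    rcases lt_trichotomy y 0 with hy | rfl | hy
    · have : 0 < x := by nlinarith
      nlinarith
    · simp
    · have : x < 0 := by nlinarith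
      nlinarith
  set θ₀ := (qDen α k : ℝ) * α - pNum α k
  set θ₁ := (qDen α (k + 1) : ℝ) * α - pNum α (k + 1)
  have hsplit : ((x * qDen α k + y * qDen α (k + 1) : ℤ) : ℝ) * α
      - ((x * pNum α k + y * pNum α (k + 1) : ℤ) : ℝ) = x * θ₀ + y * θ₁ := by
    push_cast
    ring
  have hsame : 0 ≤ x * θ₀ * (y * θ₁) := by
    have := qDen_mul_sub_pNum_mul_succ_neg hirr hα k
    have : ((x * y : ℤ) : ℝ) ≤ 0 := by exact_mod_cast hxy
    push_cast at this
    nlinarith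
  calc gaussProd α k ≤ |(x : ℝ)| * gaussProd α k :=
        le_mul_of_one_le_left (gaussProd_pos hirr hα k).le
          (by rw [← Int.cast_abs]; exact_mod_cast Int.one_le_abs hx)
    _ = |x * θ₀| := by rw [abs_mul, abs_qDen_mul_sub_pNum hirr hα]
    _ ≤ |x * θ₀| + |y * θ₁| := le_add_of_nonneg_right (abs_nonneg _)
    _ = |x * θ₀ + y * θ₁| := (abs_add_eq_add_abs_iff _ _).2 (mul_nonneg_iff.1 hsame) |>.symm
    _ = _ := by rw [hsplit]

theorem gaussProd_le_abs_fract_sub_fract {k : ℕ} {q q' : ℤ} (hne : q ≠ q')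
    (hlt : |q - q'| < qDen α (k + 1)) :
    gaussProd α k ≤ |Int.fract (q * α) - Int.fract (q' * α)| := by
  convert gaussProd_le_abs_mul_sub hirr hα (sub_ne_zero.2 hne) hlt (⌊q * α⌋ - ⌊q' * α⌋) using 2
  simp only [Int.fract, Int.cast_sub]
  ring

theorem gaussProd_le_fract_mul {k : ℕ} {q : ℤ} (hq0 : q ≠ 0) (hq : |q| < qDen α (k + 1)) :
    gaussProd α k ≤ Int.fract (q * α) := by
  have h := gaussProd_le_abs_fract_sub_fract hirr hα (q' := 0) hq0 (by rwa [sub_zero])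
  rwa [Int.cast_zero, zero_mul, Int.fract_zero, sub_zero,
    abs_of_nonneg (Int.fract_nonneg _)] at h

theorem fract_mul_le_one_sub_gaussProd {k : ℕ} {q : ℤ} (hq0 : q ≠ 0)
    (hq : |q| < qDen α (k + 1)) : Int.fract (q * α) ≤ 1 - gaussProd α k := by
  have hpos := (gaussProd_pos hirr hα k).trans_le (gaussProd_le_fract_mul hirr hα hq0 hq)
  have h := gaussProd_le_fract_mul hirr hα (neg_ne_zero.2 hq0) (by rwa [abs_neg])
  rw [Int.cast_neg, neg_mul, Int.fract_neg hpos.ne'] at h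
  linarith

theorem fract_qDen_mul_of_even {j : ℕ} (hj : Even j) :
    Int.fract ((qDen α j : ℝ) * α) = gaussProd α j := by
  rw [← sub_add_cancel ((qDen α j : ℝ) * α) (pNum α j), qDen_mul_sub_pNum hirr hα, hj.neg_one_pow,
    one_mul, Int.fract_add_intCast,
    Int.fract_eq_self.2 ⟨(gaussProd_pos hirr hα j).le, gaussProd_lt_one hirr hα j⟩]

theorem fract_qDen_mul_of_odd {j : ℕ} (hj : Odd j) :
    Int.fract ((qDen α j : ℝ) * α) = 1 - gaussProd α j := by
  have hpos := gaussProd_pos hirr hα j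
  have h01 := Int.fract_eq_self.2 ⟨hpos.le, gaussProd_lt_one hirr hα j⟩
  rw [← sub_add_cancel ((qDen α j : ℝ) * α) (pNum α j), qDen_mul_sub_pNum hirr hα, hj.neg_one_pow,
    neg_one_mul, Int.fract_add_intCast, Int.fract_neg (by rw [h01]; exact hpos.ne'), h01]

end ContinuedFraction

section ShortIntervals

variable {α : ℝ} (hirr : Irrational α) (hα : α ∈ Ioo 0 1)
include hirr hα

theorem orbitPoints_nonempty (k : ℕ) : (orbitPoints α k).Nonempty :=
  ⟨_, -1, le_rfl, by have := qDen_pos hirr hα (k + 1); omega, by norm_num, rfl⟩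

theorem orbitPoints_subset_Icc {k : ℕ} (hQ : 2 ≤ qDen α (k + 1)) :
    orbitPoints α k ⊆ Icc (gaussProd α k) (1 - gaussProd α k) := by
  rintro _ ⟨q, h1, h2, hq0, rfl⟩
  have hq : |q| < qDen α (k + 1) := by rw [abs_lt]; omega
  exact ⟨gaussProd_le_fract_mul hirr hα hq0 hq, fract_mul_le_one_sub_gaussProd hirr hα hq0 hq⟩

theorem gaussProd_le_dStarStar {k : ℕ} (hQ : 2 ≤ qDen α (k + 1)) :
    gaussProd α k ≤ dStarStar α k :=
  le_csInf (orbitPoints_nonempty hirr hα k) fun _ hx => (orbitPoints_subset_Icc hirr hα hQ hx).1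

theorem gaussProd_le_dStar {k : ℕ} (hQ : 2 ≤ qDen α (k + 1)) : gaussProd α k ≤ dStar α k :=
  le_sub_comm.1 <|
    csSup_le (orbitPoints_nonempty hirr hα k) fun _ hx => (orbitPoints_subset_Icc hirr hα hQ hx).2

theorem fract_qDen_mul_mem_orbitPoints {j k : ℕ} (hj : qDen α j + 2 ≤ qDen α (k + 1)) :
    Int.fract ((qDen α j : ℝ) * α) ∈ orbitPoints α k :=
  ⟨qDen α j, by omega, by omega, by have := qDen_pos hirr hα j; omega, by norm_cast⟩

/-- The points `{q_k α}` and `{q_{k+1} α}` lie on opposite sides of `0`. -/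
theorem dStar_add_dStarStar_le {k : ℕ} (hk : 2 ≤ k) :
    dStar α (k + 1) + dStarStar α (k + 1) ≤ gaussProd α k + gaussProd α (k + 1) := by
  have h2 := two_le_qDen hirr hα hk
  have hadd : qDen α (k + 1) + qDen α k ≤ qDen α (k + 1 + 1) := qDen_add_le hirr hα k
  have hle := qDen_le_qDen_succ hirr hα k
  have hk₀ := fract_qDen_mul_mem_orbitPoints hirr hα (j := k) (k := k + 1) (by omega)
  have hk₁ := fract_qDen_mul_mem_orbitPoints hirr hα (j := k + 1) (k := k + 1) (by omega)
  rcases Nat.even_or_odd k with he | ho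
  · rw [fract_qDen_mul_of_even hirr hα he] at hk₀
    rw [fract_qDen_mul_of_odd hirr hα he.add_one] at hk₁
    linarith [dStarStar_le_of_mem hk₀, dStar_le_of_mem hk₁]
  · rw [fract_qDen_mul_of_odd hirr hα ho] at hk₀
    rw [fract_qDen_mul_of_even hirr hα ho.add_one] at hk₁
    linarith [dStar_le_of_mem hk₀, dStarStar_le_of_mem hk₁]

theorem tendsto_gaussProd : Tendsto (gaussProd α) atTop (𝓝 0) :=
  squeeze_zero (fun k => (gaussProd_pos hirr hα k).le) (gaussProd_le_inv_qDen_succ hirr hα)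
    (tendsto_inv_atTop_zero.comp
      (tendsto_natCast_atTop_atTop.comp (strictMono_qDen_succ hirr hα).tendsto_atTop))

theorem two_mul_gaussProd_le_dStar_add_dStarStar {k : ℕ} (hQ : 2 ≤ qDen α (k + 1)) :
    2 * gaussProd α k ≤ dStar α k + dStarStar α k := by
  linarith [gaussProd_le_dStar hirr hα hQ, gaussProd_le_dStarStar hirr hα hQ]

theorem tendsto_dStar_add_dStarStar :
    Tendsto (fun k => dStar α k + dStarStar α k) atTop (𝓝[>] 0) := by
  have hpos : ∀ k, 0 < dStar α (k + 1) + dStarStar α (k + 1) := fun k =>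
    (mul_pos two_pos (gaussProd_pos hirr hα _)).trans_le
      (two_mul_gaussProd_le_dStar_add_dStarStar hirr hα (two_le_qDen hirr hα le_add_self))
  rw [← tendsto_add_atTop_iff_nat 1, tendsto_nhdsWithin_iff]
  refine ⟨squeeze_zero' (Eventually.of_forall fun k => (hpos k).le)
    (eventually_atTop.2 ⟨2, fun k hk => dStar_add_dStarStar_le hirr hα hk⟩) ?_,
    Eventually.of_forall hpos⟩
  simpa using (tendsto_gaussProd hirr hα).add
    ((tendsto_gaussProd hirr hα).comp (tendsto_add_atTop_nat 1))

theorem gaussProd_le_dist_shortCenter {k q q' : ℕ} (hne : q ≠ q') (hq : q < qDen α (k + 1))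
    (hq' : q' < qDen α (k + 1)) :
    gaussProd α k ≤ dist (shortCenter α k q) (shortCenter α k q') := by
  have := gaussProd_le_abs_fract_sub_fract hirr hα (k := k) (q := q) (q' := q')
    (by exact_mod_cast hne) (by rw [abs_lt]; omega)
  rw [Real.dist_eq, shortCenter, shortCenter]
  convert this using 2
  push_cast
  ring

theorem quarter_le_card_mul_gaussProd {k m : ℕ} (hm : 2 * m + 2 ≤ qDen α (k + 1)) :
    1 / 4 ≤ (Finset.Icc m (qDen α (k + 1) - 2)).card * gaussProd α k := by
  have hQ := inv_two_mul_qDen_succ_le_gaussProd hirr hα k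
  have hcard : (qDen α (k + 1) : ℝ) ≤ 2 * (Finset.Icc m (qDen α (k + 1) - 2)).card := by
    rw [Nat.card_Icc]
    exact_mod_cast (by omega : qDen α (k + 1) ≤ 2 * (qDen α (k + 1) - 2 + 1 - m))
  have hpos : (0 : ℝ) < qDen α (k + 1) := by exact_mod_cast qDen_pos hirr hα _
  rw [inv_le_iff_one_le_mul₀ (by positivity)] at hQ
  nlinarith [gaussProd_pos hirr hα k]

theorem pairwise_mul_gaussProd_le_dist_shortCenter {k : ℕ} {ε : ℝ} (hε : ε ≤ 1) (m : ℕ) :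
    (Finset.Icc m (qDen α (k + 1) - 2) : Set ℕ).Pairwise
      fun i j => ε * gaussProd α k ≤ dist (shortCenter α k i) (shortCenter α k j) := by
  intro i hi j hj hij
  have := qDen_pos hirr hα (k + 1)
  have hi' := (Finset.mem_Icc.1 hi).2
  have hj' := (Finset.mem_Icc.1 hj).2
  exact (mul_le_of_le_one_left (gaussProd_pos hirr hα k).le hε).trans
    (gaussProd_le_dist_shortCenter hirr hα hij (by omega) (by omega))

theorem lt_or_lt_of_not_ball_subset_intermediateDensitySet {S : Set ℝ} {ε : ℝ} (hε : 0 ≤ ε)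
    {k q : ℕ} (hQ : 2 ≤ qDen α (k + 1)) (ℓ : ℝ)
    (h : ¬ ball (ℓ + shortCenter α k q) (ε * gaussProd α k / 2)
      ⊆ intermediateDensitySet S (ε / 2) (dStar α k + dStarStar α k)) :
    (1 - ε) * (volume (shortInterval α k q)).toReal
        < (volume ((fun x => ℓ + x) '' shortInterval α k q ∩ S)).toReal ∨
      (volume ((fun x => ℓ + x) '' shortInterval α k q ∩ S)).toReal
        < ε * (volume (shortInterval α k q)).toReal := by
  have hgap := two_mul_gaussProd_le_dStar_add_dStarStar hirr hα hQ
  have := gaussProd_pos hirr hα k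
  rw [volume_shortInterval (by linarith), volume_image_const_add_shortInterval_inter]
  by_contra! hmid
  exact h (ball_subset_closedBall.trans
    (closedBall_subset_intermediateDensitySet (by nlinarith) ⟨by linarith, by linarith⟩))

end ShortIntervals

theorem almost_zero_one_law_on_short_intervals_general (α : ℝ) (hirr : Irrational α)
    (h0 : 0 < α) (h1 : α < 1) (n m : ℕ)
    (S₀ : Set ℝ) (hS₀sub : S₀ ⊆ Set.Ico (0 : ℝ) (n : ℝ)) (hS₀meas : MeasurableSet S₀)
    (ε : ℝ) (hε0 : 0 < ε) (hε1 : ε < 1 / 100) :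
    ∃ K : ℕ, ∀ k : ℕ, K ≤ k →
      ∃ q' : ℕ, m ≤ q' ∧ (q' : ℤ) ≤ (qDen α (k + 1) : ℤ) - 2 ∧
        ∀ ℓ : ℕ, ℓ < n →
          (1 - ε) * (volume (shortInterval α k q')).toReal
              < (volume ((fun x => (ℓ : ℝ) + x) '' shortInterval α k q' ∩ S₀)).toReal ∨
          (volume ((fun x => (ℓ : ℝ) + x) '' shortInterval α k q' ∩ S₀)).toReal
              < ε * (volume (shortInterval α k q')).toReal := by
  have hα : α ∈ Ioo 0 1 := ⟨h0, h1⟩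
  have hW : Tendsto (fun k => (n : ℝ≥0∞) * volume (intermediateDensitySet S₀ (ε / 2)
      (dStar α k + dStarStar α k))) atTop (𝓝 0) := by
    simpa using ENNReal.Tendsto.const_mul (tendsto_volume_intermediateDensitySet hS₀meas
      (hS₀sub.trans Ico_subset_Icc_self) (half_pos hε0) (tendsto_dStar_add_dStarStar hirr hα))
      (Or.inr (ENNReal.natCast_ne_top n))
  obtain ⟨K, hK⟩ := eventually_atTop.1
    (hW.eventually (gt_mem_nhds (ENNReal.ofReal_pos.2 (by positivity : 0 < ε / 4))))
  refine ⟨max K (2 * m + 2), fun k hk => ?_⟩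
  have hQ : 2 * m + 2 ≤ qDen α (k + 1) := (le_of_max_le_right hk).trans (le_qDen_succ hirr hα k)
  obtain ⟨q, hqF, hq⟩ := exists_forall_not_ball_subset n
    (pairwise_mul_gaussProd_le_dist_shortCenter hirr hα (k := k) (by linarith) m)
    ((hK k (le_of_max_le_left hk)).trans_le (by
      rw [← ENNReal.ofReal_natCast, ← ENNReal.ofReal_mul (Nat.cast_nonneg _)]
      have := mul_le_mul_of_nonneg_left (quarter_le_card_mul_gaussProd hirr hα hQ) hε0.le
      exact ENNReal.ofReal_le_ofReal (by linarith)))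
  refine ⟨q, (Finset.mem_Icc.1 hqF).1, by have := (Finset.mem_Icc.1 hqF).2; omega, fun ℓ hℓ => ?_⟩
  exact lt_or_lt_of_not_ball_subset_intermediateDensitySet hirr hα hε0.le (by omega) ℓ (hq ℓ hℓ)

/-- Lemma 4.3. Let `α ∈ (0,1)` be irrational, `n ≥ 2`, `m ≥ 2`,
`S₀ ⊆ [0,n)` measurable and `0 < ε < 1/100`. Then for all sufficiently large `k`
there is `q*` with `m ≤ q* ≤ q_{k+1}−2` such that each translate `ℓ + J_k(q*)`,
`0 ≤ ℓ ≤ n−1`, meets `S₀` in measure either more than `(1−ε)·λ(J_k(q*))` or less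
than `ε·λ(J_k(q*))`. -/
theorem almost_zero_one_law_on_short_intervals (α : ℝ) (hirr : Irrational α)
    (h0 : 0 < α) (h1 : α < 1) (n m : ℕ) (hn : 2 ≤ n) (hm : 2 ≤ m)
    (S₀ : Set ℝ) (hS₀sub : S₀ ⊆ Set.Ico (0 : ℝ) (n : ℝ)) (hS₀meas : MeasurableSet S₀)
    (ε : ℝ) (hε0 : 0 < ε) (hε1 : ε < 1 / 100) :
    ∃ K : ℕ, ∀ k : ℕ, K ≤ k →
      ∃ q' : ℕ, m ≤ q' ∧ (q' : ℤ) ≤ (qDen α (k + 1) : ℤ) - 2 ∧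
        ∀ ℓ : ℕ, ℓ < n →
          (1 - ε) * (volume (shortInterval α k q')).toReal
              < (volume ((fun x => (ℓ : ℝ) + x) '' shortInterval α k q' ∩ S₀)).toReal ∨
          (volume ((fun x => (ℓ : ℝ) + x) '' shortInterval α k q' ∩ S₀)).toReal
              < ε * (volume (shortInterval α k q')).toReal :=
  almost_zero_one_law_on_short_intervals_general α hirr h0 h1 n m S₀ hS₀sub hS₀meas ε hε0 hε1
end

section
/- Let (a_i)_{i≥1} be a sequence of positive integers, and define integers p_k, q_k by p_0 = 0, q_0 = 1, p_1 = 1, q_1 = a_1 and p_{k+1} = a_{k+1}p_k + p_{k−1}, q_{k+1} = a_{k+1}q_k + q_{k−1} for k ≥ 1. For integers 0 ≤ h ≤ r and an integer s ≥ 0, let 𝒜_{h,r}(s) denote the number of integer sequences (y_h, y_{h+1}, …, y_r) with y_h = s, with 0 ≤ y_i ≤ a_{i+1} for i = h+1,…,r, and with y_{i−1} = 0 whenever y_i = a_{i+1} for i = h+1,…,r. Then for every s ≥ 1, 𝒜_{h,r}(s) = (−1)^h (q_h p_{r+1} − p_h q_{r+1}), and 𝒜_{h,r}(0) = (−1)^h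 ((p_{h+1} − p_h) q_{r+1} − (q_{h+1} − q_h) p_{r+1}). -/
open scoped Classical

namespace OstrowskiAux

def Sset (a : ℕ → ℕ) (h r s : ℕ) : Set (ℕ → ℕ) :=
  {y : ℕ → ℕ | y h = s ∧ (∀ i, i < h → y i = 0) ∧ (∀ i, r < i → y i = 0) ∧
    (∀ i, h + 1 ≤ i → i ≤ r → y i ≤ a (i + 1)) ∧
    (∀ i, h + 1 ≤ i → i ≤ r → y i = a (i + 1) → y (i - 1) = 0)}

def Zset (a : ℕ → ℕ) (h r s : ℕ) : Set (ℕ → ℕ) := {y ∈ Sset a h r s | y r = 0}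

lemma finite_S (a : ℕ → ℕ) (h r s : ℕ) : (Sset a h r s).Finite := by
  classical
  set B := max s ((Finset.range (r + 2)).sup a) with hB
  set V : Set (ℕ → ℕ) := {y : ℕ → ℕ | ∀ i, y i ≤ B ∧ (r < i → y i = 0)} with hV
  have hsub : Sset a h r s ⊆ V := by
    rintro y ⟨h1, h2, h3, h4, h5⟩ i
    constructor
    · rcases lt_trichotomy i h with hi | rfl | hi
      · simp [h2 i hi]
      · rw [h1]; exact le_max_left _ _
      · rcases le_or_gt i r with hir | hir
        · refine le_trans (h4 i (by omega) hir) (le_trans ?_ (le_max_right _ _))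
          exact Finset.le_sup (Finset.mem_range.mpr (by omega))
        · simp [h3 i hir]
    · intro hi; exact h3 i hi
  refine Set.Finite.subset ?_ hsub
  have : Finite V := by
    refine Finite.of_injective
      (fun y : V => (fun i : Fin (r + 1) => (⟨y.1 i, Nat.lt_succ_of_le (y.2 i).1⟩ : Fin (B + 1)))) ?_
    rintro ⟨y, hy⟩ ⟨y', hy'⟩ heq
    ext i
    rcases le_or_gt i r with hir | hir
    · have := congrFun heq ⟨i, by omega⟩
      simpa using congrArg Fin.val this
    · show y i = y' i
      rw [(hy i).2 hir, (hy' i).2 hir]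
  exact Set.toFinite V

lemma Sbase (a : ℕ → ℕ) (h s : ℕ) :
    Sset a h h s = {fun i => if i = h then s else 0} := by
  ext y
  constructor
  · rintro ⟨h1, h2, h3, h4, h5⟩
    funext i
    rcases lt_trichotomy i h with hi | rfl | hi
    · simp [h2 i hi, Ne.symm (Nat.ne_of_gt hi) |>.symm, hi.ne]
    · simp [h1]
    · simp [h3 i hi, (Nat.ne_of_gt hi).symm, hi.ne']
  · rintro rfl
    refine ⟨by simp, fun i hi => by simp [hi.ne], fun i hi => by simp [hi.ne'],
      fun i hi1 hi2 => by omega, fun i hi1 hi2 => by omega⟩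

lemma Sbase_ncard (a : ℕ → ℕ) (h s : ℕ) : (Sset a h h s).ncard = 1 := by
  rw [Sbase]; exact Set.ncard_singleton _

lemma Zbase_pos (a : ℕ → ℕ) (h s : ℕ) (hs : 1 ≤ s) : (Zset a h h s).ncard = 0 := by
  have : Zset a h h s = ∅ := by
    ext y
    simp only [Zset, Set.mem_setOf_eq, Set.mem_empty_iff_false, iff_false, not_and]
    rintro ⟨h1, -⟩ h2
    omega
  simp [this]

lemma Zbase_zero (a : ℕ → ℕ) (h : ℕ) : (Zset a h h 0).ncard = 1 := by
  have : Zset a h h 0 = Sset a h h 0 := by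
    ext y
    simp only [Zset, Set.mem_setOf_eq, and_iff_left_iff_imp]
    exact fun hy => hy.1
  rw [this, Sbase_ncard]

lemma Zstep (a : ℕ → ℕ) (h r s : ℕ) (hpos : 1 ≤ a (r + 2)) :
    Zset a h (r + 1) s = Sset a h r s := by
  ext y
  constructor
  · rintro ⟨⟨h1, h2, h3, h4, h5⟩, h0⟩
    refine ⟨h1, h2, fun i hi => ?_, fun i hi1 hi2 => h4 i hi1 (by omega),
      fun i hi1 hi2 => h5 i hi1 (by omega)⟩
    rcases eq_or_lt_of_le (Nat.succ_le_of_lt hi) with hir | hir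
    · rw [← hir]; exact h0
    · exact h3 i (by omega)
  · rintro ⟨h1, h2, h3, h4, h5⟩
    have h0 : y (r + 1) = 0 := h3 _ (by omega)
    refine ⟨⟨h1, h2, fun i hi => h3 i (by omega), ?_, ?_⟩, h0⟩
    · intro i hi1 hi2
      rcases eq_or_ne i (r + 1) with rfl | hne
      · rw [h0]; omega
      · exact h4 i hi1 (by omega)
    · intro i hi1 hi2 hieq
      rcases eq_or_ne i (r + 1) with rfl | hne
      · rw [h0] at hieq
        have hpos' : 1 ≤ a (r + 1 + 1) := hpos
        omega
      · exact h5 i hi1 (by omega) hieq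

lemma ncard_prod {α β : Type*} (s : Set α) (t : Set β) :
    (s ×ˢ t).ncard = s.ncard * t.ncard := by
  rw [← Nat.card_coe_set_eq, ← Nat.card_coe_set_eq, ← Nat.card_coe_set_eq,
    Nat.card_congr (Equiv.Set.prod s t), Nat.card_prod]

lemma update_mem (a : ℕ → ℕ) (h r s t : ℕ) (hhr : h ≤ r) {y : ℕ → ℕ}
    (hy : y ∈ Sset a h r s) (ht : t ≤ a (r + 2)) (hta : t = a (r + 2) → y r = 0) :
    Function.update y (r + 1) t ∈ Sset a h (r + 1) s := by
  obtain ⟨h1, h2, h3, h4, h5⟩ := hy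
  refine ⟨?_, ?_, ?_, ?_, ?_⟩
  · rw [Function.update_of_ne (by omega)]; exact h1
  · intro i hi; rw [Function.update_of_ne (by omega)]; exact h2 i hi
  · intro i hi; rw [Function.update_of_ne (by omega)]; exact h3 i (by omega)
  · intro i hi1 hi2
    rcases eq_or_ne i (r + 1) with rfl | hne
    · simpa using ht
    · rw [Function.update_of_ne hne]; exact h4 i hi1 (by omega)
  · intro i hi1 hi2 hieq
    rcases eq_or_ne i (r + 1) with rfl | hne
    · rw [Function.update_self] at hieq
      have hr1 : r + 1 - 1 = r := rfl
      rw [hr1, Function.update_of_ne (Nat.lt_succ_self r).ne]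
      exact hta hieq
    · rw [Function.update_of_ne hne] at hieq
      rw [Function.update_of_ne (show i - 1 ≠ r + 1 by omega)]
      exact h5 i hi1 (by omega) hieq

lemma mem_update (a : ℕ → ℕ) (h r s : ℕ) (hhr : h ≤ r) {y' : ℕ → ℕ}
    (hy' : y' ∈ Sset a h (r + 1) s) :
    Function.update y' (r + 1) 0 ∈ Sset a h r s ∧ y' (r + 1) ≤ a (r + 2) ∧
      (y' (r + 1) = a (r + 2) → y' r = 0) := by
  obtain ⟨h1, h2, h3, h4, h5⟩ := hy'
  refine ⟨⟨?_, ?_, ?_, ?_, ?_⟩, h4 _ (by omega) (by omega), fun he => ?_⟩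
  · rw [Function.update_of_ne (by omega)]; exact h1
  · intro i hi; rw [Function.update_of_ne (by omega)]; exact h2 i hi
  · intro i hi
    rcases eq_or_ne i (r + 1) with rfl | hne
    · simp
    · rw [Function.update_of_ne hne]; exact h3 i (by omega)
  · intro i hi1 hi2; rw [Function.update_of_ne (by omega)]; exact h4 i hi1 (by omega)
  · intro i hi1 hi2 hieq
    rw [Function.update_of_ne (show i ≠ r + 1 by omega)] at hieq
    rw [Function.update_of_ne (show i - 1 ≠ r + 1 by omega)]
    exact h5 i hi1 (by omega) hieq
  · have := h5 (r + 1) (by omega) (by omega) he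
    simpa using this

lemma Sstep (a : ℕ → ℕ) (h r s : ℕ) (hhr : h ≤ r) :
    (Sset a h (r + 1) s).ncard
      = a (r + 2) * (Sset a h r s).ncard + (Zset a h r s).ncard := by
  classical
  set D : Set ((ℕ → ℕ) × ℕ) :=
    (Sset a h r s ×ˢ Set.Iio (a (r + 2))) ∪ (Zset a h r s ×ˢ {a (r + 2)}) with hD
  set Φ : (ℕ → ℕ) × ℕ → (ℕ → ℕ) := fun pr => Function.update pr.1 (r + 1) pr.2 with hΦ
  have hZS : Zset a h r s ⊆ Sset a h r s := fun y hy => hy.1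
  have hmem0 : ∀ y ∈ Sset a h r s, y (r + 1) = 0 := fun y hy => hy.2.2.1 _ (by omega)
  have hinj : Set.InjOn Φ D := by
    rintro ⟨y, t⟩ hyt ⟨y', t'⟩ hyt' heq
    have hy : y ∈ Sset a h r s := by
      rcases hyt with hh | hh
      · exact hh.1
      · exact hZS hh.1
    have hy' : y' ∈ Sset a h r s := by
      rcases hyt' with hh | hh
      · exact hh.1
      · exact hZS hh.1
    have ht : t = t' := by
      have := congrFun heq (r + 1)
      simpa [hΦ] using this
    have hyy : y = y' := by
      funext i
      rcases eq_or_ne i (r + 1) with rfl | hne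
      · rw [hmem0 y hy, hmem0 y' hy']
      · have := congrFun heq i
        simpa [hΦ, Function.update_of_ne hne] using this
    simp [hyy, ht]
  have himg : Φ '' D = Sset a h (r + 1) s := by
    ext y'
    constructor
    · rintro ⟨⟨y, t⟩, hmem, rfl⟩
      rcases hmem with ⟨hy, ht⟩ | ⟨hy, ht⟩
      · exact update_mem a h r s t hhr hy (le_of_lt ht) (fun he => absurd he (by
          simp only [Set.mem_Iio] at ht; omega))
      · simp only [Set.mem_singleton_iff] at ht
        exact update_mem a h r s t hhr hy.1 (le_of_eq ht) (fun _ => hy.2)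
    · intro hy'
      obtain ⟨hmem, hle, himp⟩ := mem_update a h r s hhr hy'
      refine ⟨(Function.update y' (r + 1) 0, y' (r + 1)), ?_, ?_⟩
      · rcases eq_or_lt_of_le hle with heq | hlt
        · right
          refine ⟨⟨hmem, ?_⟩, heq⟩
          show Function.update y' (r + 1) 0 r = 0
          rw [Function.update_of_ne (Nat.lt_succ_self r).ne]
          exact himp heq
        · left
          exact ⟨hmem, hlt⟩
      · show Function.update (Function.update y' (r + 1) 0) (r + 1) (y' (r + 1)) = y'
        rw [Function.update_idem, Function.update_eq_self]
  have hIio : (Set.Iio (a (r + 2))).ncard = a (r + 2) := by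
    have : (Set.Iio (a (r + 2))) = (↑(Finset.range (a (r + 2))) : Set ℕ) := by
      ext x; simp
    rw [this, Set.ncard_coe_finset, Finset.card_range]
  have hfin1 : (Sset a h r s ×ˢ Set.Iio (a (r + 2))).Finite :=
    (finite_S a h r s).prod (Set.finite_Iio _)
  have hfin2 : (Zset a h r s ×ˢ ({a (r + 2)} : Set ℕ)).Finite :=
    ((finite_S a h r s).subset hZS).prod (Set.finite_singleton _)
  have hdisj : Disjoint (Sset a h r s ×ˢ Set.Iio (a (r + 2)))
      (Zset a h r s ×ˢ ({a (r + 2)} : Set ℕ)) := by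
    rw [Set.disjoint_left]
    rintro ⟨y, t⟩ ⟨-, ht1⟩ ⟨-, ht2⟩
    simp only [Set.mem_Iio] at ht1
    simp only [Set.mem_singleton_iff] at ht2
    omega
  calc (Sset a h (r + 1) s).ncard = (Φ '' D).ncard := by rw [himg]
    _ = D.ncard := Set.ncard_image_of_injOn hinj
    _ = a (r + 2) * (Sset a h r s).ncard + (Zset a h r s).ncard := by
        rw [hD, Set.ncard_union_eq hdisj hfin1 hfin2, ncard_prod, ncard_prod, hIio,
          Set.ncard_singleton]
        ring

lemma det (a : ℕ → ℕ) (p q : ℕ → ℤ)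
    (hp0 : p 0 = 0) (hq0 : q 0 = 1) (hp1 : p 1 = 1) (hq1 : q 1 = (a 1 : ℤ))
    (hp : ∀ k, 1 ≤ k → p (k + 1) = (a (k + 1) : ℤ) * p k + p (k - 1))
    (hq : ∀ k, 1 ≤ k → q (k + 1) = (a (k + 1) : ℤ) * q k + q (k - 1)) :
    ∀ h, q h * p (h + 1) - p h * q (h + 1) = (-1) ^ h := by
  intro h
  induction h with
  | zero => simp [hp0, hq0, hp1, hq1]
  | succ n ih =>
    have hpn := hp (n + 1) (by omega)
    have hqn := hq (n + 1) (by omega)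
    simp only [Nat.add_sub_cancel] at hpn hqn
    rw [hpn, hqn, pow_succ]
    linear_combination (-1 : ℤ) * ih

lemma main_count (a : ℕ → ℕ) (ha : ∀ i, 1 ≤ i → 1 ≤ a i) (h s z : ℕ) (g : ℕ → ℤ)
    (hz : (Zset a h h s).ncard = z) (hg0 : g 0 = 1)
    (hg1 : g 1 = (a (h + 2) : ℤ) + (z : ℤ))
    (hgrec : ∀ k, g (k + 2) = (a (h + k + 1 + 2) : ℤ) * g (k + 1) + g k) :
    ∀ k, ((Sset a h (h + k) s).ncard : ℤ) = g k := by
  have main2 : ∀ k, ((Sset a h (h + k) s).ncard : ℤ) = g k ∧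
      ((Sset a h (h + k + 1) s).ncard : ℤ) = g (k + 1) := by
    intro k
    induction k with
    | zero =>
      constructor
      · show ((Sset a h h s).ncard : ℤ) = g 0
        rw [Sbase_ncard, hg0]; norm_num
      · have hstep := Sstep a h h s le_rfl
        rw [Sbase_ncard a h s, hz] at hstep
        show ((Sset a h (h + 1) s).ncard : ℤ) = g 1
        rw [hstep, hg1]; push_cast; ring
    | succ k ih =>
      refine ⟨ih.2, ?_⟩
      have hstep := Sstep a h (h + k + 1) s (by omega)
      rw [Zstep a h (h + k) s (ha _ (by omega))] at hstep
      show ((Sset a h (h + k + 1 + 1) s).ncard : ℤ) = g (k + 2)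
      rw [hstep, hgrec k, ← ih.1, ← ih.2]
      push_cast; ring
  exact fun k => (main2 k).1

end OstrowskiAux

/-- `ostrowskiBlockCount a h r s` is the number of integer sequences
`(y_h, y_{h+1}, …, y_r)` with `y_h = s`, with `0 ≤ y_i ≤ a_{i+1}` for
`i = h+1,…,r`, and with `y_{i−1} = 0` whenever `y_i = a_{i+1}` for `i = h+1,…,r`
(encoded as functions `ℕ → ℕ` vanishing outside `[h,r]`). -/
noncomputable def ostrowskiBlockCount (a : ℕ → ℕ) (h r s : ℕ) : ℕ :=
  {y : ℕ → ℕ | y h = s ∧ (∀ i, i < h → y i = 0) ∧ (∀ i, r < i → y i = 0) ∧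
    (∀ i, h + 1 ≤ i → i ≤ r → y i ≤ a (i + 1)) ∧
    (∀ i, h + 1 ≤ i → i ≤ r → y i = a (i + 1) → y (i - 1) = 0)}.ncard

/-- Lemma 9.1. Let `(a_i)_{i≥1}` be positive integers with
continuants `p_k, q_k` given by `p_0 = 0`, `q_0 = 1`, `p_1 = 1`, `q_1 = a_1` and
`p_{k+1} = a_{k+1}p_k + p_{k−1}`, `q_{k+1} = a_{k+1}q_k + q_{k−1}`. Then for
`0 ≤ h ≤ r`, the count `𝒜_{h,r}(s)` equals `(−1)^h (q_h p_{r+1} − p_h q_{r+1})`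
for every `s ≥ 1`, and `𝒜_{h,r}(0) = (−1)^h ((p_{h+1}−p_h)q_{r+1} − (q_{h+1}−q_h)p_{r+1})`. -/
theorem ostrowski_block_count_formula (a : ℕ → ℕ) (ha : ∀ i, 1 ≤ i → 1 ≤ a i)
    (p q : ℕ → ℤ) (hp0 : p 0 = 0) (hq0 : q 0 = 1) (hp1 : p 1 = 1) (hq1 : q 1 = (a 1 : ℤ))
    (hp : ∀ k, 1 ≤ k → p (k + 1) = (a (k + 1) : ℤ) * p k + p (k - 1))
    (hq : ∀ k, 1 ≤ k → q (k + 1) = (a (k + 1) : ℤ) * q k + q (k - 1))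
    (h r : ℕ) (hhr : h ≤ r) :
    (∀ s : ℕ, 1 ≤ s →
        (ostrowskiBlockCount a h r s : ℤ)
          = (-1) ^ h * (q h * p (r + 1) - p h * q (r + 1))) ∧
      (ostrowskiBlockCount a h r 0 : ℤ)
        = (-1) ^ h * ((p (h + 1) - p h) * q (r + 1) - (q (h + 1) - q h) * p (r + 1)) := by
  obtain ⟨k0, rfl⟩ : ∃ k0, r = h + k0 := ⟨r - h, by omega⟩
  have hcount : ∀ s, ostrowskiBlockCount a h (h + k0) s
      = (OstrowskiAux.Sset a h (h + k0) s).ncard := fun s => rfl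
  have dh := OstrowskiAux.det a p q hp0 hq0 hp1 hq1 hp hq h
  have e2 : ((-1 : ℤ) ^ h) * ((-1) ^ h) = 1 := by rw [← mul_pow]; norm_num
  have hp2 : p (h + 2) = (a (h + 2) : ℤ) * p (h + 1) + p h := by
    have t := hp (h + 1) (by omega)
    simp only [Nat.add_sub_cancel] at t
    exact t
  have hq2 : q (h + 2) = (a (h + 2) : ℤ) * q (h + 1) + q h := by
    have t := hq (h + 1) (by omega)
    simp only [Nat.add_sub_cancel] at t
    exact t
  constructor
  · intro s hs
    rw [hcount]
    refine OstrowskiAux.main_count a ha h s 0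
      (fun k => (-1) ^ h * (q h * p (h + k + 1) - p h * q (h + k + 1)))
      (OstrowskiAux.Zbase_pos a h s hs) ?_ ?_ ?_ k0
    · show (-1 : ℤ) ^ h * (q h * p (h + 1) - p h * q (h + 1)) = 1
      linear_combination ((-1 : ℤ) ^ h) * dh + e2
    · show (-1 : ℤ) ^ h * (q h * p (h + 2) - p h * q (h + 2))
        = (a (h + 2) : ℤ) + ((0 : ℕ) : ℤ)
      push_cast
      rw [hp2, hq2]
      linear_combination ((a (h + 2) : ℤ) * (-1 : ℤ) ^ h) * dh + (a (h + 2) : ℤ) * e2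
    · intro k
      have hp3 : p (h + k + 3) = (a (h + k + 3) : ℤ) * p (h + k + 2) + p (h + k + 1) := by
        have t := hp (h + k + 2) (by omega)
        exact t
      have hq3 : q (h + k + 3) = (a (h + k + 3) : ℤ) * q (h + k + 2) + q (h + k + 1) := by
        have t := hq (h + k + 2) (by omega)
        exact t
      show (-1 : ℤ) ^ h * (q h * p (h + k + 3) - p h * q (h + k + 3))
        = (a (h + k + 3) : ℤ) * ((-1 : ℤ) ^ h * (q h * p (h + k + 2) - p h * q (h + k + 2)))
          + (-1 : ℤ) ^ h * (q h * p (h + k + 1) - p h * q (h + k + 1))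
      rw [hp3, hq3]
      ring
  · rw [hcount]
    refine OstrowskiAux.main_count a ha h 0 1
      (fun k => (-1) ^ h * ((p (h + 1) - p h) * q (h + k + 1) - (q (h + 1) - q h) * p (h + k + 1)))
      (OstrowskiAux.Zbase_zero a h) ?_ ?_ ?_ k0
    · show (-1 : ℤ) ^ h * ((p (h + 1) - p h) * q (h + 1) - (q (h + 1) - q h) * p (h + 1)) = 1
      linear_combination ((-1 : ℤ) ^ h) * dh + e2
    · show (-1 : ℤ) ^ h * ((p (h + 1) - p h) * q (h + 2) - (q (h + 1) - q h) * p (h + 2))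
        = (a (h + 2) : ℤ) + ((1 : ℕ) : ℤ)
      push_cast
      rw [hp2, hq2]
      linear_combination (((a (h + 2) : ℤ) + 1) * (-1 : ℤ) ^ h) * dh
        + ((a (h + 2) : ℤ) + 1) * e2
    · intro k
      have hp3 : p (h + k + 3) = (a (h + k + 3) : ℤ) * p (h + k + 2) + p (h + k + 1) := by
        have t := hp (h + k + 2) (by omega)
        exact t
      have hq3 : q (h + k + 3) = (a (h + k + 3) : ℤ) * q (h + k + 2) + q (h + k + 1) := by
        have t := hq (h + k + 2) (by omega)
        exact t
      show (-1 : ℤ) ^ h * ((p (h + 1) - p h) * q (h + k + 3) - (q (h + 1) - q h) * p (h + k + 3))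
        = (a (h + k + 3) : ℤ) * ((-1 : ℤ) ^ h
            * ((p (h + 1) - p h) * q (h + k + 2) - (q (h + 1) - q h) * p (h + k + 2)))
          + (-1 : ℤ) ^ h * ((p (h + 1) - p h) * q (h + k + 1) - (q (h + 1) - q h) * p (h + k + 1))
      rw [hp3, hq3]
      ring
end

section
/- Let α ∈ (0,1) be irrational with continued fraction digits a_1, a_2, … and convergent denominators q_0, q_1, q_2, …. Let (b_i)_{i≥0} and (c_i)_{i≥0} be sequences of integers satisfying the Ostrowski digit conditions 0 ≤ b_0 < a_1, 0 ≤ b_i ≤ a_{i+1}, b_{i−1} = 0 whenever b_i = a_{i+1}, and likewise for (c_i); assume moreover that all c_i are even and c_i is nonzero for every even i, and that b_i < a_{i+1} for all i ≥ 1. For j ≥ 0 set N_j = Σ_{i=0}^j b_i q_i and C_j = Σ_{i=0}^j c_i q_i. Then for every integer ℓ ≥ 1: (i) the condition C_{ℓ−1} < N_{ℓ−1} ≤ N_ℓ < C_ℓ holds if and only if b_ℓ < c_ℓ and there exists an integer m < ℓ such that c_m < b_m and c_i = b_i for all m < i < ℓ; (ii) the condition N_{ℓ−1} ≤ C_{ℓ−1}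 ≤ C_ℓ < N_ℓ holds if and only if c_ℓ < b_ℓ and, in addition, either b_i = c_i for all i < ℓ, or there exists an integer m < ℓ such that b_m < c_m and b_i = c_i for all m < i < ℓ. -/
open scoped Classical

/-!
Every Ostrowski sum `∑_{i<n} x_i q_i` is smaller than `q_n`: a digit below its bound leaves
room of one `q_i`, and a maximal digit `x_i = a_{i+1}` forces `x_{i-1} = 0`, which makes
`a_{i+1} q_i + q_{i-1} = q_{i+1}` fit. Hence two such sums compare like their digit strings
read from the top (colexicographically), and in `N_ℓ = N_{ℓ-1} + b_ℓ q_ℓ`,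
`C_ℓ = C_{ℓ-1} + c_ℓ q_ℓ` the digit at `ℓ` decides the comparison unless it ties.
-/

open Finset

structure IsConvergentDenominators (a q : ℕ → ℕ) : Prop where
  zero : q 0 = 1
  one : q 1 = a 1
  add_two : ∀ k, q (k + 2) = a (k + 2) * q (k + 1) + q k

structure IsOstrowskiDigits (a x : ℕ → ℕ) : Prop where
  zero_lt : x 0 < a 1
  le : ∀ i, 1 ≤ i → x i ≤ a (i + 1)
  carry : ∀ i, 1 ≤ i → x i = a (i + 1) → x (i - 1) = 0

def ostrowskiSum (q x : ℕ → ℕ) (n : ℕ) : ℕ :=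
  ∑ i ∈ range n, x i * q i

def ColexLT (n : ℕ) (x y : ℕ → ℕ) : Prop :=
  ∃ m, m < n ∧ x m < y m ∧ ∀ i, m < i → i < n → x i = y i

section Colex

variable {x y : ℕ → ℕ} {n : ℕ}

theorem not_colexLT_zero : ¬ ColexLT 0 x y := fun ⟨_, hm, _⟩ => Nat.not_lt_zero _ hm

theorem colexLT_succ_iff : ColexLT (n + 1) x y ↔ x n < y n ∨ x n = y n ∧ ColexLT n x y := by
  constructor
  · rintro ⟨m, hm, hlt, heq⟩
    rcases Nat.lt_succ_iff_lt_or_eq.mp hm with hm | rfl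
    · exact .inr ⟨heq n hm n.lt_succ_self, m, hm, hlt, fun i hmi hin => heq i hmi (by omega)⟩
    · exact .inl hlt
  · rintro (hlt | ⟨hn, m, hm, hlt, heq⟩)
    · exact ⟨n, n.lt_succ_self, hlt, fun i hni hin => by omega⟩
    · refine ⟨m, by omega, hlt, fun i hmi hin => ?_⟩
      rcases Nat.lt_succ_iff_lt_or_eq.mp hin with hin | rfl
      exacts [heq i hmi hin, hn]

theorem colex_trichotomy (n : ℕ) (x y : ℕ → ℕ) :
    (∀ i, i < n → x i = y i) ∨ ColexLT n x y ∨ ColexLT n y x := by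
  induction n with
  | zero => exact .inl fun i hi => absurd hi (Nat.not_lt_zero i)
  | succ n ih =>
    simp only [colexLT_succ_iff]
    rcases lt_trichotomy (x n) (y n) with hlt | heq | hgt
    · exact .inr (.inl (.inl hlt))
    · rcases ih with hall | hxy | hyx
      · exact .inl fun i hi => (Nat.lt_succ_iff_lt_or_eq.mp hi).elim (hall i) (· ▸ heq)
      · exact .inr (.inl (.inr ⟨heq, hxy⟩))
      · exact .inr (.inr (.inr ⟨heq.symm, hyx⟩))
    · exact .inr (.inr (.inl hgt))

end Colex

theorem add_mul_lt_add_mul_iff {X Y Q b c : ℕ} (hX : X < Q) (hY : Y < Q) :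
    X + b * Q < Y + c * Q ↔ b < c ∨ b = c ∧ X < Y := by
  constructor
  · intro h
    rcases lt_trichotomy b c with hbc | rfl | hcb
    · exact .inl hbc
    · exact .inr ⟨rfl, by omega⟩
    · have : (c + 1) * Q ≤ b * Q := Nat.mul_le_mul_right Q hcb
      nlinarith
  · rintro (hbc | ⟨rfl, hXY⟩)
    · have : (b + 1) * Q ≤ c * Q := Nat.mul_le_mul_right Q hbc
      nlinarith
    · omega

section Ostrowski

variable {a q x y : ℕ → ℕ}

theorem ostrowskiSum_succ (n : ℕ) :
    ostrowskiSum q x (n + 1) = ostrowskiSum q x n + x n * q n :=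
  sum_range_succ _ n

theorem ostrowskiSum_congr {n : ℕ} (h : ∀ i, i < n → x i = y i) :
    ostrowskiSum q x n = ostrowskiSum q y n :=
  sum_congr rfl fun i hi => by rw [h i (mem_range.mp hi)]

theorem ostrowskiSum_lt (hq : IsConvergentDenominators a q) (hx : IsOstrowskiDigits a x)
    (n : ℕ) : ostrowskiSum q x n < q n := by
  induction n using Nat.twoStepInduction with
  | zero => simp [ostrowskiSum, hq.zero]
  | one => simpa [ostrowskiSum, hq.zero, hq.one] using hx.zero_lt
  | more n ihn ihn1 =>
    rw [ostrowskiSum_succ, hq.add_two]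
    rcases (hx.le (n + 1) n.succ_pos).lt_or_eq with hlt | hmax
    · have : (x (n + 1) + 1) * q (n + 1) ≤ a (n + 2) * q (n + 1) :=
        Nat.mul_le_mul_right _ hlt
      nlinarith
    · have hxn : x n = 0 := hx.carry (n + 1) n.succ_pos hmax
      rw [ostrowskiSum_succ, hxn, hmax]
      linarith

theorem ostrowskiSum_lt_of_colexLT (hq : IsConvergentDenominators a q)
    (hx : IsOstrowskiDigits a x) {n : ℕ} (h : ColexLT n x y) :
    ostrowskiSum q x n < ostrowskiSum q y n := by
  induction n with
  | zero => exact absurd h not_colexLT_zero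
  | succ n ih =>
    rw [ostrowskiSum_succ, ostrowskiSum_succ]
    rcases colexLT_succ_iff.mp h with hlt | ⟨heq, h⟩
    · have : (x n + 1) * q n ≤ y n * q n := Nat.mul_le_mul_right _ hlt
      have := ostrowskiSum_lt hq hx n
      nlinarith
    · rw [heq]
      exact Nat.add_lt_add_right (ih h) _

variable (hq : IsConvergentDenominators a q) (hx : IsOstrowskiDigits a x)
  (hy : IsOstrowskiDigits a y)
include hq hx hy

theorem ostrowskiSum_lt_iff {n : ℕ} :
    ostrowskiSum q x n < ostrowskiSum q y n ↔ ColexLT n x y := by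
  refine ⟨fun h => ?_, ostrowskiSum_lt_of_colexLT hq hx⟩
  rcases colex_trichotomy n x y with hall | hxy | hyx
  · exact absurd (ostrowskiSum_congr hall) h.ne
  · exact hxy
  · exact absurd (ostrowskiSum_lt_of_colexLT hq hy hyx) h.not_gt

theorem ostrowskiSum_le_iff {n : ℕ} :
    ostrowskiSum q x n ≤ ostrowskiSum q y n ↔ (∀ i, i < n → x i = y i) ∨ ColexLT n x y := by
  refine ⟨fun h => ?_, ?_⟩
  · rcases colex_trichotomy n x y with hall | hxy | hyx
    · exact .inl hall
    · exact .inr hxy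
    · exact absurd (ostrowskiSum_lt_of_colexLT hq hy hyx) h.not_gt
  · rintro (hall | hxy)
    · exact (ostrowskiSum_congr hall).le
    · exact (ostrowskiSum_lt_of_colexLT hq hx hxy).le

theorem ostrowskiSum_chain_lt_iff (n : ℕ) :
    (ostrowskiSum q y n < ostrowskiSum q x n ∧ ostrowskiSum q x n ≤ ostrowskiSum q x (n + 1) ∧
        ostrowskiSum q x (n + 1) < ostrowskiSum q y (n + 1)) ↔
      x n < y n ∧ ColexLT n y x := by
  have hlex := add_mul_lt_add_mul_iff (b := x n) (c := y n)
    (ostrowskiSum_lt hq hx n) (ostrowskiSum_lt hq hy n)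
  rw [ostrowskiSum_succ, ostrowskiSum_succ, ← ostrowskiSum_lt_iff hq hy hx, hlex]
  constructor
  · rintro ⟨hyx, -, hlt | ⟨-, hxy⟩⟩
    exacts [⟨hlt, hyx⟩, absurd hxy hyx.not_gt]
  · rintro ⟨hlt, hyx⟩
    exact ⟨hyx, Nat.le_add_right _ _, .inl hlt⟩

theorem ostrowskiSum_chain_le_iff (n : ℕ) :
    (ostrowskiSum q x n ≤ ostrowskiSum q y n ∧ ostrowskiSum q y n ≤ ostrowskiSum q y (n + 1) ∧
        ostrowskiSum q y (n + 1) < ostrowskiSum q x (n + 1)) ↔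
      y n < x n ∧ ((∀ i, i < n → x i = y i) ∨ ColexLT n x y) := by
  have hlex := add_mul_lt_add_mul_iff (b := y n) (c := x n)
    (ostrowskiSum_lt hq hy n) (ostrowskiSum_lt hq hx n)
  rw [ostrowskiSum_succ, ostrowskiSum_succ, ← ostrowskiSum_le_iff hq hx hy, hlex]
  constructor
  · rintro ⟨hxy, -, hlt | ⟨-, hyx⟩⟩
    exacts [⟨hlt, hxy⟩, absurd hxy hyx.not_ge]
  · rintro ⟨hlt, hxy⟩
    exact ⟨hxy, Nat.le_add_right _ _, .inl hlt⟩

end Ostrowski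

theorem chain_condition_characterization_general (α : ℝ)
    (b c : ℕ → ℕ)
    (hb0 : b 0 < cfDigit α 1) (hble : ∀ i, 1 ≤ i → b i ≤ cfDigit α (i + 1))
    (hbcarry : ∀ i, 1 ≤ i → b i = cfDigit α (i + 1) → b (i - 1) = 0)
    (hc0 : c 0 < cfDigit α 1) (hcle : ∀ i, 1 ≤ i → c i ≤ cfDigit α (i + 1))
    (hccarry : ∀ i, 1 ≤ i → c i = cfDigit α (i + 1) → c (i - 1) = 0) :
    letI NN : ℕ → ℕ := fun j => ∑ i ∈ Finset.range (j + 1), b i * qDen α i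
    letI CC : ℕ → ℕ := fun j => ∑ i ∈ Finset.range (j + 1), c i * qDen α i
    ∀ ℓ : ℕ, 1 ≤ ℓ →
      ((CC (ℓ - 1) < NN (ℓ - 1) ∧ NN (ℓ - 1) ≤ NN ℓ ∧ NN ℓ < CC ℓ) ↔
        (b ℓ < c ℓ ∧ ∃ m, m < ℓ ∧ c m < b m ∧ ∀ i, m < i → i < ℓ → c i = b i)) ∧
      ((NN (ℓ - 1) ≤ CC (ℓ - 1) ∧ CC (ℓ - 1) ≤ CC ℓ ∧ CC ℓ < NN ℓ) ↔
        (c ℓ < b ℓ ∧ ((∀ i, i < ℓ → b i = c i) ∨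
          ∃ m, m < ℓ ∧ b m < c m ∧ ∀ i, m < i → i < ℓ → b i = c i))) := by
  intro ℓ hℓ
  have hq : IsConvergentDenominators (cfDigit α) (qDen α) := ⟨rfl, rfl, fun _ => rfl⟩
  have hb : IsOstrowskiDigits (cfDigit α) b := ⟨hb0, hble, hbcarry⟩
  have hc : IsOstrowskiDigits (cfDigit α) c := ⟨hc0, hcle, hccarry⟩
  simp only [Nat.sub_add_cancel hℓ]
  exact ⟨ostrowskiSum_chain_lt_iff hq hb hc ℓ, ostrowskiSum_chain_le_iff hq hb hc ℓ⟩

/-- Lemma 8.2. Let `α ∈ (0,1)` be irrational with continued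
fraction digits `a_i` and convergent denominators `q_i`. Let `(b_i)` and `(c_i)`
be Ostrowski digit sequences, with all `c_i` even and `c_i ≠ 0` at even indices,
and with `b_i < a_{i+1}` for all `i ≥ 1`. Set `N_j = Σ_{i≤j} b_i q_i` and
`C_j = Σ_{i≤j} c_i q_i`. Then for every `ℓ ≥ 1` the chain conditions
`C_{ℓ−1} < N_{ℓ−1} ≤ N_ℓ < C_ℓ` and `N_{ℓ−1} ≤ C_{ℓ−1} ≤ C_ℓ < N_ℓ` are
characterized in terms of the digit sequences. -/
theorem chain_condition_characterization (α : ℝ) (hirr : Irrational α)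
    (h0 : 0 < α) (h1 : α < 1)
    (b c : ℕ → ℕ)
    (hb0 : b 0 < cfDigit α 1) (hble : ∀ i, 1 ≤ i → b i ≤ cfDigit α (i + 1))
    (hbcarry : ∀ i, 1 ≤ i → b i = cfDigit α (i + 1) → b (i - 1) = 0)
    (hc0 : c 0 < cfDigit α 1) (hcle : ∀ i, 1 ≤ i → c i ≤ cfDigit α (i + 1))
    (hccarry : ∀ i, 1 ≤ i → c i = cfDigit α (i + 1) → c (i - 1) = 0)
    (hceven : ∀ i, Even (c i)) (hcpos : ∀ i, Even i → c i ≠ 0)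
    (hblt : ∀ i, 1 ≤ i → b i < cfDigit α (i + 1)) :
    letI NN : ℕ → ℕ := fun j => ∑ i ∈ Finset.range (j + 1), b i * qDen α i
    letI CC : ℕ → ℕ := fun j => ∑ i ∈ Finset.range (j + 1), c i * qDen α i
    ∀ ℓ : ℕ, 1 ≤ ℓ →
      ((CC (ℓ - 1) < NN (ℓ - 1) ∧ NN (ℓ - 1) ≤ NN ℓ ∧ NN ℓ < CC ℓ) ↔
        (b ℓ < c ℓ ∧ ∃ m, m < ℓ ∧ c m < b m ∧ ∀ i, m < i → i < ℓ → c i = b i)) ∧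
      ((NN (ℓ - 1) ≤ CC (ℓ - 1) ∧ CC (ℓ - 1) ≤ CC ℓ ∧ CC ℓ < NN ℓ) ↔
        (c ℓ < b ℓ ∧ ((∀ i, i < ℓ → b i = c i) ∨
          ∃ m, m < ℓ ∧ b m < c m ∧ ∀ i, m < i → i < ℓ → b i = c i))) :=
  chain_condition_characterization_general α b c hb0 hble hbcarry hc0 hcle hccarry
end

section
/- Let α ∈ (0,1) be irrational and b ∈ (0,1), and let x ∈ [0,1). Then the orbit of the point (0,x) under the Veech skew product T_{2,α,b} on X = (ℤ/2ℤ) × [0,1) is equidistributed if and only if the orbit of the point (0, {b+1−x}) under the Veech skew product T_{2,1−α,b} on X is equidistributed. -/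
open scoped Classical

/-! Write `y_j`, `y'_j` for the heights along the two orbits. As `α + (1 - α) = 1`, the sum
`y_j + y'_j` stays congruent to `b` modulo 1, i.e. `y'_j = {b - y_j}`. The reflection
`y ↦ {b - y}` maps the gate `(0, b)` onto itself, and by irrationality the orbit meets `0` and `b`
at most once each, so the two level sequences eventually differ by a constant. Likewise
`y'_j ∈ [c, d)` agrees, for all but finitely many `j`, with `y_j` lying in the arc `[b - d, b - c)`
modulo 1, a union of at most two intervals; so equidistribution transfers from one orbit to the
other, and the construction is symmetric. -/

open Filter Topology Finset

section AsymptoticDensity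

def HasAsymptoticDensity (P : ℕ → Prop) [DecidablePred P] (L : ℝ) : Prop :=
  Tendsto (fun N : ℕ => (((range N).filter P).card : ℝ) / N) atTop (𝓝 L)

variable {P Q : ℕ → Prop} [DecidablePred P] [DecidablePred Q] {L L' : ℝ}

lemma card_filter_range_le_add {J : ℕ} (hPQ : ∀ j ≥ J, P j → Q j) (N : ℕ) :
    ((range N).filter P).card ≤ ((range N).filter Q).card + J := by
  have hsub : (range N).filter P ⊆ (range N).filter Q ∪ range J := by
    intro j hj
    simp only [mem_filter, mem_union, mem_range] at hj ⊢
    by_cases hjJ : J ≤ j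
    · exact Or.inl ⟨hj.1, hPQ j hjJ hj.2⟩
    · exact Or.inr (not_le.1 hjJ)
  calc _ ≤ _ := card_le_card hsub
    _ ≤ _ := card_union_le _ _
    _ = _ := by rw [card_range]

lemma HasAsymptoticDensity.congr_eventually (h : HasAsymptoticDensity P L)
    (hPQ : ∀ᶠ j in atTop, P j ↔ Q j) : HasAsymptoticDensity Q L := by
  obtain ⟨J, hJ⟩ := eventually_atTop.1 hPQ
  have hcard : ∀ N : ℕ,
      |(((range N).filter P).card : ℝ) - ((range N).filter Q).card| ≤ J := fun N => by
    have hPQ' : (((range N).filter P).card : ℝ) ≤ ((range N).filter Q).card + J := mod_cast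
      card_filter_range_le_add (fun j hj => (hJ j hj).1) N
    have hQP : (((range N).filter Q).card : ℝ) ≤ ((range N).filter P).card + J := mod_cast
      card_filter_range_le_add (fun j hj => (hJ j hj).2) N
    rw [abs_sub_le_iff]
    constructor <;> linarith
  refine h.congr_dist (squeeze_zero (fun _ => dist_nonneg) (fun N => ?_)
    (tendsto_const_div_atTop_nhds_zero_nat (J : ℝ)))
  rw [Real.dist_eq, ← sub_div, abs_div, Nat.abs_cast]
  gcongr
  exact hcard N

lemma HasAsymptoticDensity.or (hP : HasAsymptoticDensity P L) (hQ : HasAsymptoticDensity Q L')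
    (hdisj : ∀ j, P j → ¬Q j) : HasAsymptoticDensity (fun j => P j ∨ Q j) (L + L') := by
  refine (hP.add hQ).congr fun N => ?_
  rw [filter_or, card_union_of_disjoint (disjoint_filter.2 fun j _ => hdisj j), Nat.cast_add,
    add_div]

end AsymptoticDensity

section Fract

lemma fract_sub_lt_iff {y s β : ℝ} (hy : y ∈ Set.Ico 0 1) (hs0 : 0 ≤ s) (hs1 : s ≤ 1) :
    Int.fract (y - s) < β ↔ y ∈ Set.Ico s (s + β) ∨ y < s + β - 1 := by
  obtain ⟨hy0, hy1⟩ := hy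
  rcases le_or_gt s y with hsy | hys
  · rw [Int.fract_eq_self.2 ⟨by linarith, by linarith⟩, Set.mem_Ico]
    constructor
    · intro h; exact Or.inl ⟨hsy, by linarith⟩
    · rintro (⟨-, h⟩ | h) <;> linarith
  · rw [← Int.fract_add_one, Int.fract_eq_self.2 ⟨by linarith, by linarith⟩, Set.mem_Ico]
    constructor
    · intro h; exact Or.inr (by linarith)
    · rintro (⟨h, -⟩ | h) <;> linarith

lemma mem_Ico_iff_fract_sub_lt {y c d : ℝ} (hy : y ∈ Set.Ico 0 1) (hc : 0 ≤ c) (hcd : c ≤ d)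
    (hd : d ≤ 1) : y ∈ Set.Ico c d ↔ Int.fract (y - c) < d - c := by
  rw [fract_sub_lt_iff hy hc (hcd.trans hd), add_sub_cancel, or_iff_left]
  linarith [hy.1]

/-- Modulo 1, the left side says `u ∈ (-β, 0]` and the right side `u ∈ [-β, 0)`. -/
lemma fract_neg_lt_iff {u β : ℝ} (hu : Int.fract u ≠ 0) (huβ : Int.fract (u + β) ≠ 0)
    (hβ0 : 0 ≤ β) (hβ1 : β ≤ 1) : Int.fract (-u) < β ↔ Int.fract (u + β) < β := by
  have hshift : Int.fract (u + β) = Int.fract (Int.fract u + β) :=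
    Int.fract_eq_fract.2 ⟨⌊u⌋, by linarith [Int.fract_sub_self u]⟩
  have hv0 := Int.fract_nonneg u
  have hv1 := Int.fract_lt_one u
  rw [Int.fract_neg hu, hshift]
  rw [hshift] at huβ
  rcases lt_or_ge (Int.fract u + β) 1 with hlt | hge
  · rw [Int.fract_eq_self.2 ⟨by linarith, hlt⟩]
    exact iff_of_false (by linarith) (by linarith)
  · have hwrap : Int.fract (Int.fract u + β) = Int.fract u + β - 1 :=
      Int.fract_eq_iff.2 ⟨by linarith, by linarith, 1, by push_cast; ring⟩
    rw [hwrap] at huβ ⊢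
    exact iff_of_true (by contrapose! huβ; linarith) (by linarith)

lemma fract_sub_lt_iff_lt {b y : ℝ} (hy0 : 0 < y) (hy1 : y < 1) (hyb : y ≠ b) :
    Int.fract (b - y) < b ↔ y < b := by
  rcases hyb.lt_or_gt with hyb | hby
  · refine iff_of_true ?_ hyb
    rcases lt_or_ge b 1 with hb1 | hb1
    · rw [Int.fract_eq_self.2 ⟨by linarith, by linarith⟩]; linarith
    · linarith [Int.fract_lt_one (b - y)]
  · refine iff_of_false (not_lt.2 ?_) (not_lt.2 hby.le)
    rcases le_or_gt b 0 with hb0 | hb0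
    · linarith [Int.fract_nonneg (b - y)]
    · rw [← Int.fract_add_one, Int.fract_eq_self.2 ⟨by linarith, by linarith⟩]; linarith

lemma Irrational.eventually_fract_add_mul_ne_zero {α : ℝ} (hα : Irrational α) (x : ℝ) :
    ∀ᶠ j : ℕ in atTop, Int.fract (x + j * α) ≠ 0 := by
  rw [← Nat.cofinite_eq_atTop, eventually_cofinite]
  refine Set.Subsingleton.finite fun i hi j hj => ?_
  simp only [not_not, Set.mem_ofPred_eq] at hi hj
  obtain ⟨z, hz⟩ := Int.fract_eq_fract.1 (hi.trans hj.symm)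
  by_contra hij
  have hij' : ((i : ℤ) - j : ℤ) ≠ 0 := sub_ne_zero.2 (by exact_mod_cast hij)
  exact (hα.intCast_mul hij').ne_int z (by push_cast; linarith)

end Fract

section Orbit

variable {n : ℕ} {α b : ℝ}

lemma veechT_snd (p : ZMod n × ℝ) : (veechT n α b p).2 = Int.fract (p.2 + α) := by
  unfold veechT; split_ifs <;> rfl

lemma iterate_veechT_succ_fst (p : ZMod n × ℝ) (j : ℕ) :
    ((veechT n α b)^[j + 1] p).1 =
      ((veechT n α b)^[j] p).1 + if ((veechT n α b)^[j + 1] p).2 < b then 1 else 0 := by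
  rw [Function.iterate_succ_apply']
  unfold veechT
  split_ifs <;> simp

lemma fract_iterate_veechT_snd (p : ZMod n × ℝ) (j : ℕ) :
    Int.fract ((veechT n α b)^[j] p).2 = Int.fract (p.2 + j * α) := by
  induction j with
  | zero => simp
  | succ j ih =>
    rw [Function.iterate_succ_apply', veechT_snd, Int.fract_fract]
    refine Int.fract_eq_fract.2 ?_
    obtain ⟨z, hz⟩ := Int.fract_eq_fract.1 ih
    exact ⟨z, by push_cast; linarith⟩

lemma iterate_veechT_succ_snd_mem_Ico (p : ZMod n × ℝ) (j : ℕ) :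
    ((veechT n α b)^[j + 1] p).2 ∈ Set.Ico 0 1 := by
  rw [Function.iterate_succ_apply', veechT_snd]
  exact ⟨Int.fract_nonneg _, Int.fract_lt_one _⟩

lemma eventually_iterate_veechT_snd_mem_Ico (p : ZMod n × ℝ) :
    ∀ᶠ j in atTop, ((veechT n α b)^[j] p).2 ∈ Set.Ico 0 1 :=
  eventually_atTop.2 ⟨1, fun j hj => by
    obtain ⟨k, rfl⟩ := Nat.exists_eq_add_of_le' hj
    exact iterate_veechT_succ_snd_mem_Ico p k⟩

lemma Irrational.eventually_fract_iterate_veechT_snd_sub_ne_zero (hα : Irrational α)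
    (p : ZMod n × ℝ) (v : ℝ) :
    ∀ᶠ j in atTop, Int.fract (((veechT n α b)^[j] p).2 - v) ≠ 0 := by
  filter_upwards [hα.eventually_fract_add_mul_ne_zero (p.2 - v)] with j hj
  obtain ⟨z, hz⟩ := Int.fract_eq_fract.1 (fract_iterate_veechT_snd (α := α) (b := b) p j)
  rwa [(Int.fract_eq_fract (b := p.2 - v + j * α)).2 ⟨z, by linarith⟩]

lemma veechEquidistributed.hasAsymptoticDensity {p : ZMod n × ℝ}
    (h : veechEquidistributed n α b p) (m : ZMod n) {c d : ℝ} (hc : 0 ≤ c) (hcd : c ≤ d)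
    (hd : d ≤ 1) :
    HasAsymptoticDensity (fun j => ((veechT n α b)^[j] p).1 = m ∧
      ((veechT n α b)^[j] p).2 ∈ Set.Ico c d) ((d - c) / n) :=
  h m c d hc hcd hd

theorem veechEquidistributed.hasAsymptoticDensity_arc {p : ZMod n × ℝ}
    (h : veechEquidistributed n α b p) (m : ZMod n) (s : ℝ) {β : ℝ} (hβ0 : 0 ≤ β)
    (hβ1 : β ≤ 1) :
    HasAsymptoticDensity (fun j => ((veechT n α b)^[j] p).1 = m ∧
      Int.fract (((veechT n α b)^[j] p).2 - s) < β) (β / n) := by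
  set s₀ := Int.fract s
  have hs₀ : ∀ y : ℝ, y ∈ Set.Ico 0 1 →
      (Int.fract (y - s) < β ↔ y ∈ Set.Ico s₀ (s₀ + β) ∨ y < s₀ + β - 1) := fun y hy => by
    rw [← fract_sub_lt_iff hy (Int.fract_nonneg s) (Int.fract_lt_one s).le,
      (Int.fract_eq_fract (b := y - s₀)).2 ⟨-⌊s⌋, by push_cast; linarith [Int.fract_sub_self s]⟩]
  rcases le_or_gt (s₀ + β) 1 with hle | hgt
  · have hint :=
      h.hasAsymptoticDensity m (c := s₀) (d := s₀ + β) (Int.fract_nonneg s) (by linarith) hle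
    rw [add_sub_cancel_left] at hint
    refine HasAsymptoticDensity.congr_eventually hint ?_
    filter_upwards [eventually_iterate_veechT_snd_mem_Ico p] with j hj
    rw [hs₀ _ hj, or_iff_left (by linarith [hj.1])]
  · have hint := (h.hasAsymptoticDensity m (Int.fract_nonneg s) (Int.fract_lt_one s).le
      le_rfl).or (h.hasAsymptoticDensity m (c := 0) (d := s₀ + β - 1) le_rfl (by linarith)
        (by linarith [Int.fract_lt_one s]))
      (fun j h₁ h₂ => by linarith [h₁.2.1, h₂.2.2, Int.fract_lt_one s])
    rw [← add_div, show 1 - s₀ + (s₀ + β - 1 - 0) = β by ring] at hint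
    refine HasAsymptoticDensity.congr_eventually hint ?_
    filter_upwards [eventually_iterate_veechT_snd_mem_Ico p] with j hj
    rw [hs₀ _ hj, ← and_or_left]
    refine and_congr_right fun _ => ?_
    obtain ⟨hy0, hy1⟩ := hj
    simp only [Set.mem_Ico]
    constructor
    · rintro (⟨h₁, -⟩ | ⟨-, h₂⟩)
      · exact Or.inl ⟨h₁, by linarith⟩
      · exact Or.inr h₂
    · rintro (⟨h₁, -⟩ | h₂)
      · exact Or.inl ⟨h₁, hy1⟩
      · exact Or.inr ⟨hy0, h₂⟩

lemma fract_iterate_veechT_snd_add_reflect {p p' : ZMod n × ℝ}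
    (hpp' : Int.fract (p.2 + p'.2) = Int.fract b) (j : ℕ) :
    Int.fract (((veechT n α b)^[j] p).2 + ((veechT n (1 - α) b)^[j] p').2) = Int.fract b := by
  induction j with
  | zero => exact hpp'
  | succ j ih =>
    rw [Function.iterate_succ_apply', Function.iterate_succ_apply', veechT_snd, veechT_snd, ← ih]
    set y := ((veechT n α b)^[j] p).2
    set y' := ((veechT n (1 - α) b)^[j] p').2
    refine Int.fract_eq_fract.2 ⟨1 - ⌊y + α⌋ - ⌊y' + (1 - α)⌋, ?_⟩
    push_cast
    linarith [Int.fract_sub_self (y + α), Int.fract_sub_self (y' + (1 - α))]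

lemma Irrational.exists_eventually_iterate_veechT_fst_reflect (hα : Irrational α)
    {p p' : ZMod n × ℝ} (hpp' : Int.fract (p.2 + p'.2) = Int.fract b) :
    ∃ δ : ZMod n, ∀ᶠ j in atTop,
      ((veechT n (1 - α) b)^[j] p').1 = ((veechT n α b)^[j] p).1 + δ := by
  have hgate : ∀ᶠ j in atTop,
      (((veechT n (1 - α) b)^[j + 1] p').2 < b ↔ ((veechT n α b)^[j + 1] p).2 < b) := by
    filter_upwards [(tendsto_add_atTop_nat 1).eventually
        (hα.eventually_fract_iterate_veechT_snd_sub_ne_zero (b := b) p 0),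
      (tendsto_add_atTop_nat 1).eventually
        (hα.eventually_fract_iterate_veechT_snd_sub_ne_zero (b := b) p b)] with j h0 hb
    have hy := iterate_veechT_succ_snd_mem_Ico (α := α) (b := b) p j
    have hy' := iterate_veechT_succ_snd_mem_Ico (α := 1 - α) (b := b) p' j
    obtain ⟨z, hz⟩ := Int.fract_eq_fract.1 (fract_iterate_veechT_snd_add_reflect hpp' (j + 1))
    set y := ((veechT n α b)^[j + 1] p).2
    set y' := ((veechT n (1 - α) b)^[j + 1] p').2
    have hy'_eq : y' = Int.fract (b - y) := by
      rw [← Int.fract_eq_self.2 hy']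
      exact Int.fract_eq_fract.2 ⟨z, by linarith⟩
    rw [hy'_eq]
    refine fract_sub_lt_iff_lt (lt_of_le_of_ne hy.1 ?_) hy.2 ?_
    · intro h; apply h0; rw [← h, sub_zero, Int.fract_zero]
    · intro h; apply hb; rw [h, sub_self, Int.fract_zero]
  obtain ⟨J, hJ⟩ := eventually_atTop.1 hgate
  refine ⟨((veechT n (1 - α) b)^[J] p').1 - ((veechT n α b)^[J] p).1,
    eventually_atTop.2 ⟨J, fun j hj => ?_⟩⟩
  induction j, hj using Nat.le_induction with
  | base => ring
  | succ j hj ih =>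
    rw [iterate_veechT_succ_fst, iterate_veechT_succ_fst, ih]
    simp only [hJ j hj]
    ring

theorem veechEquidistributed.reflect (hα : Irrational α) {p p' : ZMod n × ℝ}
    (hpp' : Int.fract (p.2 + p'.2) = Int.fract b) (h : veechEquidistributed n α b p) :
    veechEquidistributed n (1 - α) b p' := by
  intro m c d hc hcd hd
  obtain ⟨δ, hδ⟩ := hα.exists_eventually_iterate_veechT_fst_reflect hpp'
  refine (h.hasAsymptoticDensity_arc (m - δ) (b - d) (sub_nonneg.2 hcd)
    (by linarith)).congr_eventually ?_
  filter_upwards [hδ, eventually_iterate_veechT_snd_mem_Ico (α := 1 - α) (b := b) p',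
    hα.eventually_fract_iterate_veechT_snd_sub_ne_zero (b := b) p (b - c),
    hα.eventually_fract_iterate_veechT_snd_sub_ne_zero (b := b) p (b - d)] with j hℓ hmem hc' hd'
  rw [hℓ, ← eq_sub_iff_add_eq, mem_Ico_iff_fract_sub_lt hmem hc hcd hd]
  refine and_congr_right fun _ => ?_
  obtain ⟨z, hz⟩ := Int.fract_eq_fract.1 (fract_iterate_veechT_snd_add_reflect hpp' j)
  have hy' : Int.fract (((veechT n (1 - α) b)^[j] p').2 - c) =
      Int.fract (-(((veechT n α b)^[j] p).2 - (b - c))) :=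
    Int.fract_eq_fract.2 ⟨z, by linarith⟩
  rw [hy']
  rw [show ((veechT n α b)^[j] p).2 - (b - d) = ((veechT n α b)^[j] p).2 - (b - c) + (d - c)
    by ring] at hd' ⊢
  exact (fract_neg_lt_iff hc' hd' (sub_nonneg.2 hcd) (by linarith)).symm

end Orbit

theorem equidistribution_slope_reflection_general (α b x : ℝ) (hirr : Irrational α) :
    veechEquidistributed 2 α b ((0 : ZMod 2), x) ↔
      veechEquidistributed 2 (1 - α) b ((0 : ZMod 2), Int.fract (b + 1 - x)) := by
  have hsum : Int.fract (x + Int.fract (b + 1 - x)) = Int.fract b :=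
    Int.fract_eq_fract.2 ⟨1 - ⌊b + 1 - x⌋, by push_cast; linarith [Int.fract_sub_self (b + 1 - x)]⟩
  refine ⟨fun h => h.reflect hirr hsum, fun h => ?_⟩
  have := h.reflect (by simpa using hirr.intCast_sub 1) (p' := ((0 : ZMod 2), x))
    (by rwa [add_comm])
  rwa [sub_sub_cancel] at this

/-- Lemma 1.1. For irrational `α ∈ (0,1)`, gate size `b ∈ (0,1)`
and starting height `x ∈ [0,1)`, the orbit of `(0,x)` under `T_{2,α,b}` is
equidistributed if and only if the orbit of `(0,{b+1−x})` under `T_{2,1−α,b}` is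
equidistributed. -/
theorem equidistribution_slope_reflection (α b x : ℝ) (hirr : Irrational α)
    (h0 : 0 < α) (h1 : α < 1) (hb0 : 0 < b) (hb1 : b < 1)
    (hx : x ∈ Set.Ico (0 : ℝ) 1) :
    veechEquidistributed 2 α b ((0 : ZMod 2), x) ↔
      veechEquidistributed 2 (1 - α) b ((0 : ZMod 2), Int.fract (b + 1 - x)) :=
  equidistribution_slope_reflection_general α b x hirr
end
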